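/- arXiv:math/0701066 — 7 statements merged into one kernel-verified Lean document; each statement's English description precedes it below -/
import Mathlib

section
/- For nonnegative integers $a_0, a_1, \ldots, a_n$, the constant term of the Laurent polynomial $\prod_{0\le i\ne j\le n}(1 - x_i/x_j)^{a_j}$ equals the multinomial coefficient $(a_0+a_1+\cdots+a_n)!/(a_0!\,a_1!\cdots a_n!)$. -/
open MvPolynomial Finset

set_option maxHeartbeats 1000000

theorem coeff_lbasis {F : Type*} [Field F] (n : ℕ) (v : Fin (n+1) → F) (i : Fin (n+1)) :
    (Lagrange.basis univ v i).coeff n = ∏ j ∈ univ.erase i, (v i - v j)⁻¹ := by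
  have hcard : (univ.erase i).card = n := by simp
  rw [Lagrange.basis]
  simp only [Lagrange.basisDivisor]
  rw [prod_mul_distrib, ← map_prod (Polynomial.C : F →+* Polynomial F), Polynomial.coeff_C_mul]
  have hm : (∏ j ∈ univ.erase i, (Polynomial.X - Polynomial.C (v j))).Monic :=
    Polynomial.monic_prod_of_monic _ _ fun j _ => Polynomial.monic_X_sub_C _
  have hd : (∏ j ∈ univ.erase i, (Polynomial.X - Polynomial.C (v j))).natDegree = n := by
    rw [Polynomial.natDegree_prod_of_monic _ _ fun j _ => Polynomial.monic_X_sub_C _]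
    simp [hcard]
  have h1 := hm.coeff_natDegree
  rw [hd] at h1
  rw [h1, mul_one]

theorem lagrange_field {F : Type*} [Field F] (n : ℕ) (v : Fin (n+1) → F)
    (hv : Function.Injective v) :
    ∑ k, v k ^ n * ∏ j ∈ univ.erase k, (v k - v j)⁻¹ = 1 := by
  have hcard : (univ : Finset (Fin (n+1))).card = n + 1 := by simp
  have key := Lagrange.eq_interpolate (s := (univ : Finset (Fin (n+1)))) (v := v)
    (f := (Polynomial.X : Polynomial F)^n) hv.injOn
    (by rw [Polynomial.degree_X_pow, hcard]; exact_mod_cast Nat.lt_succ_self n)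
  have h2 := congrArg (fun p => Polynomial.coeff p n) key
  simp only [Lagrange.interpolate_apply, Polynomial.finset_sum_coeff, Polynomial.coeff_X_pow,
    if_pos rfl, Polynomial.coeff_C_mul, Polynomial.eval_pow, Polynomial.eval_X, coeff_lbasis] at h2
  exact h2.symm

theorem lagrange_poly (n : ℕ) :
    ∑ k : Fin (n+1), (X k : MvPolynomial (Fin (n+1)) ℚ)^n *
        ∏ m ∈ univ.erase k, ∏ i ∈ univ.erase m, (X m - X i)
      = ∏ m : Fin (n+1), ∏ i ∈ univ.erase m, (X m - X i) := by
  set P := MvPolynomial (Fin (n+1)) ℚ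
  let F := FractionRing P
  have hinj : Function.Injective (algebraMap P F) := IsFractionRing.injective P F
  apply hinj
  set φ := algebraMap P F with hφ
  set v : Fin (n+1) → F := fun k => φ (X k) with hv
  have hvinj : Function.Injective v := fun a b h => MvPolynomial.X_injective (hinj h)
  have hsub : ∀ m i : Fin (n+1), m ≠ i → v m - v i ≠ 0 := by
    intro m i hmi h
    exact hmi (hvinj (sub_eq_zero.mp h))
  set Lb : Fin (n+1) → F := fun m => ∏ i ∈ univ.erase m, (v m - v i) with hLb
  have hLbne : ∀ m, Lb m ≠ 0 := by
    intro m
    exact prod_ne_zero_iff.mpr fun i hi => hsub m i (mem_erase.mp hi).1.symm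
  have hmap : ∀ m : Fin (n+1), φ (∏ i ∈ univ.erase m, (X m - X i : P)) = Lb m := by
    intro m; rw [map_prod]; exact prod_congr rfl fun i _ => by rw [map_sub]
  have key := lagrange_field n v hvinj
  simp only [prod_inv_distrib] at key
  calc φ (∑ k : Fin (n+1), (X k : P)^n * ∏ m ∈ univ.erase k, ∏ i ∈ univ.erase m, (X m - X i))
      = ∑ k, v k ^ n * ∏ m ∈ univ.erase k, Lb m := by
        rw [map_sum]
        refine sum_congr rfl fun k _ => ?_
        rw [map_mul, map_pow, map_prod]
        exact congrArg _ (prod_congr rfl fun m _ => hmap m)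
    _ = ∑ k, (v k ^ n * (Lb k)⁻¹) * ∏ m : Fin (n+1), Lb m := by
        refine sum_congr rfl fun k _ => ?_
        rw [← mul_prod_erase univ Lb (mem_univ k)]
        rw [mul_assoc, inv_mul_cancel_left₀ (hLbne k)]
    _ = ∏ m : Fin (n+1), Lb m := by
        rw [← sum_mul, key, one_mul]
    _ = φ (∏ m : Fin (n+1), ∏ i ∈ univ.erase m, (X m - X i)) := by
        rw [map_prod]; exact (prod_congr rfl fun m _ => hmap m).symm

theorem coeff_kill {σ : Type*} [Fintype σ] [DecidableEq σ] (k : σ) (m : σ →₀ ℕ)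
    (hm : m k = 0) (p : MvPolynomial σ ℚ) :
    coeff m (aeval (fun i => if i = k then 0 else X i) p) = coeff m p := by
  induction p using MvPolynomial.induction_on' with
  | add p q hp hq => rw [map_add, coeff_add, coeff_add, hp, hq]
  | monomial u c =>
    rw [aeval_monomial]
    by_cases hu : u k = 0
    · have : (u.prod fun i e => (if i = k then 0 else X i : MvPolynomial σ ℚ) ^ e)
          = u.prod fun i e => X i ^ e := by
        refine Finsupp.prod_congr fun i hi => ?_
        rw [if_neg]
        rintro rfl
        exact Finsupp.mem_support_iff.mp hi hu
      rw [this, algebraMap_eq, ← monomial_eq]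
    · have : (u.prod fun i e => (if i = k then 0 else X i : MvPolynomial σ ℚ) ^ e) = 0 := by
        refine Finset.prod_eq_zero (Finsupp.mem_support_iff.mpr hu) ?_
        simp [zero_pow hu]
      rw [this, mul_zero, coeff_zero, coeff_monomial, if_neg]
      rintro rfl
      exact hu hm

noncomputable def dG (N : ℕ) (a : Fin (N+1) → ℕ) : MvPolynomial (Fin (N+1)) ℚ :=
  ∏ j, ∏ i ∈ univ.erase j, (X j - X i) ^ a j

noncomputable def dM (N : ℕ) (a : Fin (N+1) → ℕ) : Fin (N+1) →₀ ℕ :=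
  Finsupp.equivFunOnFinite.symm fun j => N * a j

theorem reduce (N : ℕ) (a : Fin (N+2) → ℕ) (k : Fin (N+2)) (hk : a k = 0) :
    coeff (dM (N+1) a) (dG (N+1) a) = coeff (dM N (a ∘ k.succAbove)) (dG N (a ∘ k.succAbove)) := by
  set e := k.succAbove with he'
  have he : Function.Injective e := Fin.succAbove_right_injective
  have himg : Finset.image e univ = univ.erase k := by
    ext i
    simp only [mem_image, mem_univ, true_and, mem_erase, and_true]
    constructor
    · rintro ⟨j, rfl⟩; exact Fin.succAbove_ne k j
    · intro hi; exact Fin.exists_succAbove_eq hi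
  set a' : Fin (N+1) → ℕ := a ∘ e with ha'
  have hMk : dM (N+1) a k = 0 := by simp [dM, hk]
  rw [← coeff_kill k _ hMk]
  have hA : aeval (fun i => if i = k then 0 else X i) (dG (N+1) a)
      = rename e ((∏ j' : Fin (N+1), (X j' : MvPolynomial (Fin (N+1)) ℚ) ^ a' j') * dG N a') := by
    have h1 : dG (N+1) a = ∏ j ∈ univ.erase k, ∏ i ∈ univ.erase j, (X j - X i) ^ a j := by
      rw [dG]
      exact (prod_erase univ (by simp [hk])).symm
    rw [h1, map_prod]
    have h2 : ∀ j ∈ univ.erase k,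
        (aeval (fun i => if i = k then 0 else X i))
          (∏ i ∈ univ.erase j, (X j - X i : MvPolynomial (Fin (N+2)) ℚ) ^ a j)
        = (X j ^ a j * ∏ i ∈ (univ.erase j).erase k, (X j - X i) ^ a j : MvPolynomial (Fin (N+2)) ℚ) := by
      intro j hj
      obtain ⟨hjk, -⟩ := mem_erase.mp hj
      rw [map_prod]
      have hkj : k ∈ univ.erase j := mem_erase.mpr ⟨fun h => hjk h.symm, mem_univ k⟩
      rw [← mul_prod_erase _ _ hkj]
      congr 1
      · rw [map_pow, map_sub, aeval_X, aeval_X, if_pos rfl, if_neg hjk, sub_zero]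
      · refine prod_congr rfl fun i hi => ?_
        obtain ⟨hik, hi'⟩ := mem_erase.mp hi
        rw [map_pow, map_sub, aeval_X, aeval_X, if_neg hjk, if_neg hik]
    rw [prod_congr rfl h2, prod_mul_distrib]
    rw [map_mul, map_prod, dG, map_prod]
    congr 1
    · rw [← himg, prod_image (fun x _ y _ h => he h)]
      exact prod_congr rfl fun j' _ => by rw [map_pow, rename_X]; rfl
    · rw [← himg, prod_image (fun x _ y _ h => he h)]
      refine prod_congr rfl fun j' _ => ?_
      rw [map_prod]
      have hset : (univ.erase (e j')).erase k = Finset.image e (univ.erase j') := by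
        rw [Finset.image_erase he, himg]
        ext i
        simp only [mem_erase]
        tauto
      rw [hset, prod_image (fun x _ y _ h => he h)]
      exact prod_congr rfl fun i' _ => by rw [map_pow, map_sub, rename_X, rename_X]; rfl
  rw [hA]
  have hC : dM (N+1) a
      = Finsupp.mapDomain e (Finsupp.equivFunOnFinite.symm fun j' => (N+1) * a' j') := by
    ext i
    by_cases hi : i = k
    · subst hi
      rw [Finsupp.mapDomain_notin_range]
      · simp [dM, hk]
      · rw [Fin.range_succAbove]; simp
    · obtain ⟨j', rfl⟩ := Fin.exists_succAbove_eq hi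
      rw [Finsupp.mapDomain_apply he]
      simp [dM, ha', he']
  rw [hC, coeff_rename_mapDomain e he]
  have hmono : (∏ j' : Fin (N+1), (X j' : MvPolynomial (Fin (N+1)) ℚ) ^ a' j')
      = monomial (Finsupp.equivFunOnFinite.symm a') 1 := by
    rw [← prod_X_pow_eq_monomial]
    rw [← prod_subset (subset_univ (Finsupp.equivFunOnFinite.symm a').support)]
    · exact prod_congr rfl fun j' _ => by simp
    · intro x _ hx
      have : a' x = 0 := by simpa using (Finsupp.notMem_support_iff.mp hx)
      simp [this]
  rw [hmono, coeff_monomial_mul', if_pos, one_mul]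
  · congr 1
    ext j'
    rw [Finsupp.tsub_apply]
    simp only [dM, Finsupp.coe_equivFunOnFinite_symm, Function.comp_apply]
    rw [Nat.add_one_mul, Nat.add_sub_cancel]
  · refine Finsupp.le_def.mpr fun j' => ?_
    simp only [Finsupp.coe_equivFunOnFinite_symm]
    exact Nat.le_mul_of_pos_left _ (Nat.succ_pos N)

theorem Grec (N : ℕ) (a : Fin (N+1) → ℕ) (ha : ∀ k, 1 ≤ a k) :
    dG N a = ∑ k, X k ^ N * dG N (fun j => a j - if j = k then 1 else 0) := by
  set b : Fin (N+1) → ℕ := fun j => a j - 1 with hb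
  have hab : ∀ j, a j = b j + 1 := fun j => (Nat.succ_pred_eq_of_pos (ha j)).symm
  have hGa : dG N a = dG N b * ∏ m, ∏ i ∈ univ.erase m, (X m - X i) := by
    rw [dG, dG, ← prod_mul_distrib]
    refine prod_congr rfl fun j _ => ?_
    rw [← prod_mul_distrib]
    refine prod_congr rfl fun i _ => ?_
    rw [hab j, pow_succ]
  have hGk : ∀ k, dG N (fun j => a j - if j = k then 1 else 0)
      = dG N b * ∏ m ∈ univ.erase k, ∏ i ∈ univ.erase m, (X m - X i) := by
    intro k
    have hstep : dG N (fun j => a j - if j = k then 1 else 0)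
        = ∏ j, ((∏ i ∈ univ.erase j, (X j - X i) ^ b j) *
            if j = k then 1 else ∏ i ∈ univ.erase j, (X j - X i)) := by
      rw [dG]
      refine prod_congr rfl fun j _ => ?_
      by_cases hj : j = k
      · subst hj
        simp [hb]
      · simp only [if_neg hj, ← prod_mul_distrib]
        refine prod_congr rfl fun i _ => ?_
        rw [← pow_succ]
        congr 1
        simp [hj, hab j]
    rw [hstep, prod_mul_distrib, ← dG]
    congr 1
    rw [← Finset.prod_erase (f := fun x => if x = k then 1
      else ∏ i ∈ univ.erase x, (X x - X i : MvPolynomial (Fin (N+1)) ℚ)) univ (if_pos rfl)]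
    exact prod_congr rfl fun j hj => if_neg (mem_erase.mp hj).1
  calc dG N a = dG N b * ∏ m, ∏ i ∈ univ.erase m, (X m - X i) := hGa
    _ = dG N b * ∑ k, (X k : MvPolynomial (Fin (N+1)) ℚ)^N *
          ∏ m ∈ univ.erase k, ∏ i ∈ univ.erase m, (X m - X i) := by rw [lagrange_poly]
    _ = ∑ k, X k ^ N * dG N (fun j => a j - if j = k then 1 else 0) := by
        rw [mul_sum]
        refine sum_congr rfl fun k _ => ?_
        rw [hGk k]
        ring

theorem pascal (N : ℕ) (a : Fin (N+1) → ℕ) (ha : ∀ k, 1 ≤ a k) :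
    ((∑ i, a i).factorial : ℚ) / ∏ i, ((a i).factorial : ℚ)
    = ∑ k, (((∑ i, (a i - if i = k then 1 else 0)).factorial : ℚ)
        / ∏ i, (((a i - if i = k then 1 else 0)).factorial : ℚ)) := by
  set S := ∑ i, a i with hS
  have hS1 : 1 ≤ S := le_trans (ha 0) (Finset.single_le_sum (fun i _ => Nat.zero_le _) (mem_univ 0))
  have hprodne : (∏ i, ((a i).factorial : ℚ)) ≠ 0 :=
    prod_ne_zero_iff.mpr fun i _ => Nat.cast_ne_zero.mpr (Nat.factorial_ne_zero _)
  have hsumk : ∀ k, ∑ i, (a i - if i = k then 1 else 0) = S - 1 := by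
    intro k
    have e1 : ∑ i, (a i - if i = k then 1 else 0)
        = (a k - 1) + ∑ i ∈ univ.erase k, a i := by
      rw [← Finset.add_sum_erase _ _ (mem_univ k), if_pos rfl]
      congr 1
      exact sum_congr rfl fun i hi => by rw [if_neg (mem_erase.mp hi).1, Nat.sub_zero]
    have e2 : S = a k + ∑ i ∈ univ.erase k, a i := (Finset.add_sum_erase _ a (mem_univ k)).symm
    have := ha k
    omega
  have hterm : ∀ k : Fin (N+1),
      (((∑ i, (a i - if i = k then 1 else 0)).factorial : ℚ)
        / ∏ i, (((a i - if i = k then 1 else 0)).factorial : ℚ))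
      = ((S-1).factorial : ℚ) * (a k) / ∏ i, ((a i).factorial : ℚ) := by
    intro k
    rw [hsumk k]
    have hbne : (∏ i, (((a i - if i = k then 1 else 0)).factorial : ℚ)) ≠ 0 :=
      prod_ne_zero_iff.mpr fun i _ => Nat.cast_ne_zero.mpr (Nat.factorial_ne_zero _)
    rw [div_eq_div_iff hbne hprodne]
    have hpk : (∏ i, (((a i - if i = k then 1 else 0)).factorial : ℚ)) * (a k)
        = ∏ i, ((a i).factorial : ℚ) := by
      rw [← Finset.mul_prod_erase _ _ (mem_univ k), ← Finset.mul_prod_erase _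
        (fun i => ((a i).factorial : ℚ)) (mem_univ k), if_pos rfl]
      have h2 : ∏ i ∈ univ.erase k, (((a i - if i = k then 1 else 0)).factorial : ℚ)
          = ∏ i ∈ univ.erase k, ((a i).factorial : ℚ) :=
        prod_congr rfl fun i hi => by rw [if_neg (mem_erase.mp hi).1, Nat.sub_zero]
      rw [h2]
      have h3 : ((a k - 1).factorial : ℚ) * (a k) = ((a k).factorial : ℚ) := by
        rw [mul_comm, ← Nat.cast_mul, Nat.mul_factorial_pred (Nat.one_le_iff_ne_zero.mp (ha k))]
      rw [mul_right_comm, h3, mul_comm]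
    rw [← hpk]
    ring
  rw [Finset.sum_congr rfl fun k _ => hterm k]
  rw [← Finset.sum_div, ← Finset.mul_sum]
  have h4 : ∑ i, ((a i : ℚ)) = (S : ℚ) := by rw [hS]; push_cast; ring
  rw [h4]
  have h5 : (((S-1).factorial : ℚ)) * (S : ℚ) = (S.factorial : ℚ) := by
    rw [mul_comm, ← Nat.cast_mul, Nat.mul_factorial_pred (Nat.one_le_iff_ne_zero.mp hS1)]
  rw [h5]

theorem dysonAux : ∀ N (a : Fin (N+1) → ℕ),
    coeff (dM N a) (dG N a) = ((∑ i, a i).factorial : ℚ) / ∏ i, ((a i).factorial : ℚ) := by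
  intro N
  induction N with
  | zero =>
    intro a
    have hG : dG 0 a = 1 := by
      rw [dG]
      refine prod_eq_one fun j _ => ?_
      have : (univ : Finset (Fin 1)).erase j = ∅ := by
        ext i
        simp [Subsingleton.elim i j]
      rw [this, prod_empty]
    have hM : dM 0 a = 0 := by ext i; simp [dM]
    rw [hG, hM, coeff_zero_one, Fin.sum_univ_one, Fin.prod_univ_one,
      div_self (Nat.cast_ne_zero.mpr (Nat.factorial_ne_zero _))]
  | succ N ih =>
    intro a
    generalize hs : ∑ i, a i = s
    induction s using Nat.strong_induction_on generalizing a with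
    | _ s IH =>
    by_cases h0 : ∃ k, a k = 0
    · obtain ⟨k, hk⟩ := h0
      rw [reduce N a k hk, ih (a ∘ k.succAbove)]
      have hsum : ∑ i, (a ∘ k.succAbove) i = ∑ i, a i := by
        rw [Fin.sum_univ_succAbove a k, hk, zero_add]; rfl
      have hprod : ∏ i, (((a ∘ k.succAbove) i).factorial : ℚ) = ∏ i, ((a i).factorial : ℚ) := by
        rw [Fin.prod_univ_succAbove (fun i => ((a i).factorial : ℚ)) k, hk]
        simp
      rw [hsum, hprod, hs]
    · push_neg at h0
      have ha : ∀ k, 1 ≤ a k := fun k => Nat.one_le_iff_ne_zero.mpr (h0 k)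
      have hs1 : 1 ≤ s := by
        rw [← hs]
        exact le_trans (ha 0) (Finset.single_le_sum (fun i _ => Nat.zero_le _) (mem_univ 0))
      rw [Grec (N+1) a ha, coeff_sum]
      have hterm : ∀ k : Fin (N+2),
          coeff (dM (N+1) a) (X k ^ (N+1) * dG (N+1) (fun j => a j - if j = k then 1 else 0))
          = coeff (dM (N+1) (fun j => a j - if j = k then 1 else 0))
              (dG (N+1) (fun j => a j - if j = k then 1 else 0)) := by
        intro k
        rw [X_pow_eq_monomial, coeff_monomial_mul', if_pos, one_mul]
        · congr 1
          ext i
          rw [Finsupp.tsub_apply]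
          simp only [dM, Finsupp.coe_equivFunOnFinite_symm]
          by_cases hi : i = k
          · subst hi
            rw [Finsupp.single_eq_same, if_pos rfl, Nat.mul_sub, Nat.mul_one]
          · rw [Finsupp.single_eq_of_ne' (fun h => hi h.symm), if_neg hi, Nat.sub_zero,
              Nat.sub_zero]
        · rw [Finsupp.single_le_iff]
          simp only [dM, Finsupp.coe_equivFunOnFinite_symm]
          exact Nat.le_mul_of_pos_right _ (ha k)
      rw [Finset.sum_congr rfl fun k _ => hterm k]
      have hIH : ∀ k : Fin (N+2),
          coeff (dM (N+1) (fun j => a j - if j = k then 1 else 0))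
              (dG (N+1) (fun j => a j - if j = k then 1 else 0))
          = ((∑ i, (a i - if i = k then 1 else 0)).factorial : ℚ)
              / ∏ i, (((a i - if i = k then 1 else 0)).factorial : ℚ) := by
        intro k
        have e1 : ∑ i, (a i - if i = k then 1 else 0)
            = (a k - 1) + ∑ i ∈ univ.erase k, a i := by
          rw [← Finset.add_sum_erase _ _ (mem_univ k), if_pos rfl]
          congr 1
          exact sum_congr rfl fun i hi => by rw [if_neg (mem_erase.mp hi).1, Nat.sub_zero]
        have e2 : s = a k + ∑ i ∈ univ.erase k, a i := by
          rw [← hs]; exact (Finset.add_sum_erase _ a (mem_univ k)).symm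
        have hak := ha k
        have e3 : ∑ i, (a i - if i = k then 1 else 0) = s - 1 := by omega
        rw [e3]
        exact IH (s - 1) (by omega) _ e3
      rw [Finset.sum_congr rfl fun k _ => hIH k, ← pascal (N+1) a ha, hs]

/-- **Dyson's conjecture.** The constant term of `∏_{0 ≤ i ≠ j ≤ n} (1 - x_i/x_j)^(a_j)`
equals the multinomial coefficient `(a_0 + ⋯ + a_n)! / (a_0! ⋯ a_n!)`.
Clearing denominators, the constant term equals the coefficient of `∏_j x_j^(n * a_j)` in
`∏_{i ≠ j} (x_j - x_i)^(a_j)`. -/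
theorem dyson_conjecture (n : ℕ) (a : Fin (n + 1) → ℕ) :
    MvPolynomial.coeff (Finsupp.equivFunOnFinite.symm fun j => n * a j)
      (∏ j : Fin (n + 1), ∏ i ∈ Finset.univ.erase j,
        (X j - X i : MvPolynomial (Fin (n + 1)) ℚ) ^ (a j))
      = ((∑ i, a i).factorial : ℚ) / ∏ i, ((a i).factorial : ℚ) :=
  dysonAux n a
end

section
/- Let $a_0,\ldots,a_n$ be nonnegative integers, $d = a_1+\cdots+a_n$, and let $L(x_1,\ldots,x_n)$ be a Laurent polynomial not depending on $a_0$. Fix an integer $k_0 \ge -d$. Then, for fixed $a_1,\ldots,a_n$, the constant term $Q(a_0) := \mathrm{CT}_x\, x_0^{k_0} L(x_1,\ldots,x_n) \prod_{l=1}^n (1-x_l/x_0)^{a_0}(1-x_0/x_l)^{a_l}$ agrees with a polynomial in $a_0$ of degree at most $d+k_0$; that is, there exists a polynomial $p$ of degree at most $d+k_0$ with $Q(a_0) = p(a_0)$ for all nonnegative integers $a_0$. -/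
open MvPolynomial Finset

namespace PolyAux

noncomputable def Sp (n : ℕ) : Polynomial (MvPolynomial (Fin n) ℚ) :=
  ∏ l : Fin n, (Polynomial.X - Polynomial.C (MvPolynomial.X l))

noncomputable def Rp (n : ℕ) : Polynomial (MvPolynomial (Fin n) ℚ) := Sp n - Polynomial.X ^ n

noncomputable def Gp (n : ℕ) (a : Fin n → ℕ) (P : MvPolynomial (Fin n) ℚ) :
    Polynomial (MvPolynomial (Fin n) ℚ) :=
  Polynomial.C P * ∏ l : Fin n, (Polynomial.C (MvPolynomial.X l) - Polynomial.X) ^ (a l)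

noncomputable def cj (n : ℕ) (a c : Fin n → ℕ) (P : MvPolynomial (Fin n) ℚ) (k₀ : ℤ) (j : ℕ) : ℚ :=
  if k₀ ≤ (n:ℤ)*j then
    MvPolynomial.coeff (Finsupp.equivFunOnFinite.symm (fun l => a l + c l))
      ((Gp n a P * (Rp n)^j).coeff (((n:ℤ)*j - k₀).toNat))
  else 0

lemma Sp_monic (n : ℕ) : (Sp n).Monic :=
  Polynomial.monic_prod_of_monic _ _ fun l _ => Polynomial.monic_X_sub_C _

lemma Sp_natDegree (n : ℕ) : (Sp n).natDegree = n := by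
  rw [Sp, Polynomial.natDegree_prod _ _ (fun l _ => (Polynomial.monic_X_sub_C _).ne_zero)]
  simp [Polynomial.natDegree_X_sub_C]

lemma Rp_natDegree (n : ℕ) : (Rp n).natDegree ≤ n - 1 := by
  rcases eq_or_ne (Rp n) 0 with h | h
  · simp [h]
  rcases Nat.eq_zero_or_pos n with rfl | hn
  · exfalso; apply h; simp [Rp, Sp]
  have hSd : (Sp n).degree = (n : ℕ) := by
    rw [Polynomial.degree_eq_natDegree (Sp_monic n).ne_zero, Sp_natDegree]
  have hdeg : (Rp n).degree < (n : ℕ) := by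
    have h1 : (Sp n).degree = ((Polynomial.X : Polynomial (MvPolynomial (Fin n) ℚ)) ^ n).degree := by
      rw [Polynomial.degree_X_pow, hSd]
    have := Polynomial.degree_sub_lt h1 (Sp_monic n).ne_zero
      (by rw [(Sp_monic n).leadingCoeff, Polynomial.leadingCoeff_X_pow])
    rw [hSd] at this
    exact this
  have := (Polynomial.natDegree_lt_iff_degree_lt h).mpr hdeg
  omega

lemma Gp_natDegree (n : ℕ) (a : Fin n → ℕ) (P : MvPolynomial (Fin n) ℚ) :
    (Gp n a P).natDegree ≤ ∑ l, a l := by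
  refine (Polynomial.natDegree_mul_le).trans ?_
  rw [Polynomial.natDegree_C, zero_add]
  refine (Polynomial.natDegree_prod_le _ _).trans (Finset.sum_le_sum fun l _ => ?_)
  refine (Polynomial.natDegree_pow_le).trans ?_
  calc a l * (Polynomial.C (MvPolynomial.X l) - Polynomial.X :
      Polynomial (MvPolynomial (Fin n) ℚ)).natDegree
      ≤ a l * 1 := Nat.mul_le_mul_left _ ((Polynomial.natDegree_sub_le _ _).trans (by simp))
    _ = a l := mul_one _

lemma fse_rename (n : ℕ) (P : MvPolynomial (Fin n) ℚ) :
    finSuccEquiv ℚ n (rename Fin.succ P) = Polynomial.C P := by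
  induction P using MvPolynomial.induction_on with
  | C r => rw [rename_C]; simp [finSuccEquiv_apply]
  | add p q hp hq => rw [map_add, map_add, hp, hq, map_add]
  | mul_X p i hp => rw [map_mul, map_mul, hp, rename_X, finSuccEquiv_X_succ, map_mul]

lemma fse_big (n : ℕ) (a : Fin n → ℕ) (P : MvPolynomial (Fin n) ℚ) (a₀ : ℕ) :
    finSuccEquiv ℚ n ((rename Fin.succ P) *
      ∏ l : Fin n, (X (0:Fin (n+1)) - X l.succ : MvPolynomial (Fin (n+1)) ℚ)^a₀ *
        (X l.succ - X (0:Fin (n+1)))^(a l))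
      = Gp n a P * (Sp n)^a₀ := by
  rw [map_mul, fse_rename, map_prod]
  simp only [map_mul, map_pow, map_sub, finSuccEquiv_X_zero, finSuccEquiv_X_succ]
  rw [Finset.prod_mul_distrib, Finset.prod_pow, Gp, Sp]
  ring

lemma cons_eq (n : ℕ) (N : ℕ) (t : Fin n → ℕ) :
    (Finsupp.equivFunOnFinite.symm t : Fin n →₀ ℕ).cons N
      = Finsupp.equivFunOnFinite.symm (Fin.cons N t) := by
  ext i
  simp only [Finsupp.cons, Finsupp.coe_mk, Finsupp.coe_equivFunOnFinite_symm]

lemma coeff_term (n : ℕ) (a c : Fin n → ℕ) (P : MvPolynomial (Fin n) ℚ) (k₀ : ℤ) (a₀ j : ℕ)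
    (hj : j ≤ a₀) (h : k₀ ≤ (n:ℤ)*a₀) :
    MvPolynomial.coeff (Finsupp.equivFunOnFinite.symm fun l => a l + c l)
      ((Gp n a P * (Rp n ^ j * (Polynomial.X ^ n) ^ (a₀ - j) *
        (a₀.choose j : Polynomial (MvPolynomial (Fin n) ℚ)))).coeff (((n:ℤ)*a₀ - k₀).toNat))
      = cj n a c P k₀ j * (a₀.choose j : ℚ) := by
  have hre : Gp n a P * (Rp n ^ j * (Polynomial.X ^ n) ^ (a₀ - j) *
        (a₀.choose j : Polynomial (MvPolynomial (Fin n) ℚ)))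
      = Polynomial.C ((a₀.choose j : ℕ) : MvPolynomial (Fin n) ℚ) *
        ((Gp n a P * Rp n ^ j) * Polynomial.X ^ (n * (a₀ - j))) := by
    rw [map_natCast Polynomial.C, ← pow_mul]
    ring
  rw [hre, Polynomial.coeff_C_mul, Polynomial.coeff_mul_X_pow',
    ← map_natCast (MvPolynomial.C (σ := Fin n) (R := ℚ)), MvPolynomial.coeff_C_mul, apply_ite
      (MvPolynomial.coeff (Finsupp.equivFunOnFinite.symm fun l => a l + c l)), coeff_zero]
  set u := n * j with hu
  set v := n * a₀ with hv
  have huv : u ≤ v := Nat.mul_le_mul_left n hj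
  have hsub : n * (a₀ - j) = v - u := by rw [hu, hv, Nat.mul_sub]
  have hvz : ((v:ℕ):ℤ) = (n:ℤ) * a₀ := by push_cast [hv]; ring
  have huz : ((u:ℕ):ℤ) = (n:ℤ) * j := by push_cast [hu]; ring
  rw [cj, hsub, mul_comm]
  congr 1
  rw [← huz, ← hvz] at *
  have hcond : (v - u ≤ ((v:ℤ) - k₀).toNat) ↔ (k₀ ≤ (u:ℤ)) := by omega
  have hval : (((v:ℤ) - k₀).toNat - (v - u)) = ((u:ℤ) - k₀).toNat := by omega
  by_cases hc : k₀ ≤ (u:ℤ)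
  · rw [if_pos hc, if_pos (hcond.mpr hc), hval]
  · rw [if_neg hc, if_neg (fun hh => hc (hcond.mp hh))]

lemma coeff_big (n : ℕ) (a c : Fin n → ℕ) (P : MvPolynomial (Fin n) ℚ) (k₀ : ℤ) (a₀ : ℕ)
    (h : k₀ ≤ (n:ℤ)*a₀) :
    MvPolynomial.coeff (Finsupp.equivFunOnFinite.symm (fun l => a l + c l))
      ((Gp n a P * (Sp n)^a₀).coeff (((n:ℤ)*a₀ - k₀).toNat))
      = ∑ j ∈ range (a₀+1), cj n a c P k₀ j * (a₀.choose j : ℚ) := by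
  have hS : Sp n = Rp n + Polynomial.X ^ n := by rw [Rp, sub_add_cancel]
  rw [hS, add_pow, Finset.mul_sum, Polynomial.finset_sum_coeff, MvPolynomial.coeff_sum]
  exact Finset.sum_congr rfl fun j hj =>
    coeff_term n a c P k₀ a₀ j (by simpa [Nat.lt_succ_iff] using hj) h

lemma cj_eq_zero (n : ℕ) (a c : Fin n → ℕ) (P : MvPolynomial (Fin n) ℚ) (k₀ : ℤ)
    (hk : -((∑ l, a l : ℕ) : ℤ) ≤ k₀) (j : ℕ) (hj : ((∑ l, a l : ℕ) : ℤ) + k₀ < j) :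
    cj n a c P k₀ j = 0 := by
  rw [cj]
  split_ifs with hc
  · rcases Nat.eq_zero_or_pos n with rfl | hn
    · have hR : Rp 0 = 0 := by simp [Rp, Sp]
      have hj1 : j ≠ 0 := by intro h; subst h; simp at hc; omega
      rw [hR, zero_pow hj1, mul_zero, Polynomial.coeff_zero, MvPolynomial.coeff_zero]
    · obtain ⟨m, rfl⟩ : ∃ m, n = m + 1 := ⟨n - 1, by omega⟩
      set d := ∑ l, a l with hd
      have hdeg : (Gp (m+1) a P * Rp (m+1) ^ j).natDegree ≤ d + j * m := by
        refine Polynomial.natDegree_mul_le.trans (add_le_add (Gp_natDegree _ a P) ?_)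
        refine Polynomial.natDegree_pow_le.trans ?_
        have := Rp_natDegree (m+1)
        simp only [Nat.add_sub_cancel] at this
        exact Nat.mul_le_mul_left j this
      have hlt : (Gp (m+1) a P * Rp (m+1) ^ j).natDegree < (((m+1:ℕ):ℤ) * j - k₀).toNat := by
        refine lt_of_le_of_lt hdeg ?_
        have h1 : ((m+1) * j : ℕ) = j * m + j := by ring
        have h2 : (((m+1)*j : ℕ) : ℤ) = ((m+1:ℕ):ℤ) * j := by push_cast; ring
        omega
      rw [Polynomial.coeff_eq_zero_of_natDegree_lt hlt, MvPolynomial.coeff_zero]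
  · rfl

end PolyAux

/-- **Polynomiality lemma.** Let `d = a_1 + ⋯ + a_n`, let `L(x_1,…,x_n)` be a Laurent
polynomial independent of `a_0` (written as `P / ∏_l x_l^(c_l)` with `P` a polynomial),
and let `k₀ ≥ -d` be an integer.  Then
`Q(a₀) = CT_x x_0^(k₀) L(x_1,…,x_n) ∏_{l=1}^n (1-x_l/x_0)^(a₀) (1-x_0/x_l)^(a_l)`
agrees with a polynomial in `a₀` of degree at most `d + k₀`.  Clearing denominators,
`Q(a₀)` is the coefficient of `x_0^(n·a₀ - k₀) ∏_l x_l^(a_l + c_l)` in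
`P · ∏_{l=1}^n (x_0 - x_l)^(a₀) (x_l - x_0)^(a_l)` (and `0` when `n·a₀ - k₀ < 0`). -/
theorem polynomiality_lemma (n : ℕ) (a : Fin n → ℕ) (d : ℕ) (hd : d = ∑ l, a l)
    (P : MvPolynomial (Fin n) ℚ) (c : Fin n → ℕ) (k₀ : ℤ) (hk : -(d : ℤ) ≤ k₀) :
    ∃ p : Polynomial ℚ, p.natDegree ≤ ((d : ℤ) + k₀).toNat ∧
      ∀ a₀ : ℕ,
        (if k₀ ≤ ((n : ℤ) * a₀) then
          MvPolynomial.coeff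
            (Finsupp.equivFunOnFinite.symm
              (Fin.cons (((n : ℤ) * a₀ - k₀).toNat) (fun l => a l + c l)))
            ((MvPolynomial.rename Fin.succ P) *
              ∏ l : Fin n,
                (X (0 : Fin (n + 1)) - X l.succ : MvPolynomial (Fin (n + 1)) ℚ) ^ a₀ *
                  (X l.succ - X (0 : Fin (n + 1))) ^ (a l))
        else 0) = p.eval (a₀ : ℚ) := by
  classical
  set D := ((d : ℤ) + k₀).toNat with hD
  set cf : ℕ → ℚ := PolyAux.cj n a c P k₀ with hcf
  have hcf_zero : ∀ j : ℕ, D < j → cf j = 0 := by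
    intro j hj
    refine PolyAux.cj_eq_zero n a c P k₀ (by rw [← hd]; exact hk) j ?_
    rw [← hd]
    omega
  refine ⟨∑ j ∈ range (D+1), Polynomial.C (cf j / (j.factorial : ℚ)) * descPochhammer ℚ j,
    ?_, ?_⟩
  · refine (Polynomial.natDegree_sum_le _ _).trans ?_
    rw [Finset.fold_max_le]
    refine ⟨Nat.zero_le _, fun j hj => ?_⟩
    refine (Polynomial.natDegree_mul_le).trans ?_
    rw [Polynomial.natDegree_C, zero_add, descPochhammer_natDegree]
    simpa [Nat.lt_succ_iff] using hj
  · intro a₀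
    have heval : (∑ j ∈ range (D+1),
          Polynomial.C (cf j / (j.factorial : ℚ)) * descPochhammer ℚ j).eval (a₀ : ℚ)
        = ∑ j ∈ range (D+1), cf j * (a₀.choose j : ℚ) := by
      rw [Polynomial.eval_finset_sum]
      refine Finset.sum_congr rfl fun j _ => ?_
      rw [Polynomial.eval_mul, Polynomial.eval_C, descPochhammer_eval_eq_descFactorial,
        Nat.descFactorial_eq_factorial_mul_choose]
      have hfac : (j.factorial : ℚ) ≠ 0 := Nat.cast_ne_zero.mpr j.factorial_ne_zero
      push_cast
      field_simp
    rw [heval]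
    split_ifs with h
    · rw [← PolyAux.cons_eq, ← MvPolynomial.finSuccEquiv_coeff_coeff, PolyAux.fse_big,
        PolyAux.coeff_big n a c P k₀ a₀ h]
      set M := max a₀ D with hM
      have h1 : ∑ j ∈ range (a₀+1), cf j * (a₀.choose j : ℚ)
          = ∑ j ∈ range (M+1), cf j * (a₀.choose j : ℚ) := by
        refine Finset.sum_subset (Finset.range_subset_range.mpr (by omega)) fun j hj hnj => ?_
        have : a₀ < j := by
          simp only [Finset.mem_range] at hj hnj
          omega
        simp [Nat.choose_eq_zero_of_lt this]
      have h2 : ∑ j ∈ range (D+1), cf j * (a₀.choose j : ℚ)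
          = ∑ j ∈ range (M+1), cf j * (a₀.choose j : ℚ) := by
        refine Finset.sum_subset (Finset.range_subset_range.mpr (by omega)) fun j hj hnj => ?_
        have : D < j := by
          simp only [Finset.mem_range] at hj hnj
          omega
        rw [hcf_zero j this, zero_mul]
      rw [h1, ← h2]
    · symm
      refine Finset.sum_eq_zero fun j hj => ?_
      rcases le_or_gt j a₀ with hja | hja
      · have hcz : cf j = 0 := by
          rw [hcf, PolyAux.cj, if_neg]
          intro hcon
          exact h (hcon.trans (by
            have : (n:ℤ) * j ≤ (n:ℤ) * a₀ := by
              exact mul_le_mul_of_nonneg_left (by exact_mod_cast hja) (by positivity)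
            exact this))
        rw [hcz, zero_mul]
      · rw [Nat.choose_eq_zero_of_lt hja, Nat.cast_zero, mul_zero]
end

section
/- Suppose that for nonnegative integers $n, k, b$ with $k\ge b$ and a positive integer $h \le nk$, the coefficient of $x_1^{m_1}\cdots x_n^{m_n}$ with $m_i = (n-1)k+b$ in $\frac{\prod_{1\le i<j\le n}(x_i-x_j)^{2k}}{\prod_{l=1}^n (1-x_l)^{h-b}}$ is nonzero. Then there exists an integer $t$ with $0\le t\le n$ such that $(t-1)k + b < h \le tk$. -/
open Finset

namespace MorrisAux

noncomputable section

variable {n : ℕ}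

/-- The geometric series `1/(1-X l)` in one variable `l`. -/
def T (l : Fin n) : MvPowerSeries (Fin n) ℚ :=
  fun d => if d = Finsupp.single l (d l) then (1 : ℚ) else 0

lemma coeff_T (l : Fin n) (d : Fin n →₀ ℕ) :
    MvPowerSeries.coeff d (T l) = if d = Finsupp.single l (d l) then (1 : ℚ) else 0 :=
  rfl

lemma diag_iff (l : Fin n) (d : Fin n →₀ ℕ) :
    d = Finsupp.single l (d l) ↔ ∀ l', l' ≠ l → d l' = 0 := by
  constructor
  · intro hd l' hl'
    rw [hd]
    simp [Finsupp.single_apply, (Ne.symm hl' : ¬ l = l')]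
  · intro hd
    ext l'
    rcases eq_or_ne l' l with rfl | hl'
    · simp
    · simp [Finsupp.single_apply, (Ne.symm hl' : ¬ l = l'), hd l' hl']

lemma coeff_X_mul (l : Fin n) (φ : MvPowerSeries (Fin n) ℚ) (d : Fin n →₀ ℕ) :
    MvPowerSeries.coeff d (MvPowerSeries.X l * φ) =
      if Finsupp.single l 1 ≤ d then MvPowerSeries.coeff (d - Finsupp.single l 1) φ else 0 := by
  rw [MvPowerSeries.X_def, MvPowerSeries.coeff_monomial_mul]
  split_ifs <;> simp

lemma geo (l : Fin n) : (1 - MvPowerSeries.X l) * T l = 1 := by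
  have hX : (MvPowerSeries.X l : MvPowerSeries (Fin n) ℚ) * T l = T l - 1 := by
    ext d
    rw [coeff_X_mul]
    rw [map_sub, MvPowerSeries.coeff_one]
    by_cases hdl : Finsupp.single l 1 ≤ d
    · have hdl' : 1 ≤ d l := by
        simpa using (Finsupp.single_le_iff.mp hdl)
      have hd0 : d ≠ 0 := by
        intro h
        rw [h] at hdl'; simp at hdl'
      rw [if_neg hd0]
      have key : ((d - Finsupp.single l 1 : Fin n →₀ ℕ)
            = Finsupp.single l ((d - Finsupp.single l 1 : Fin n →₀ ℕ) l))
          ↔ (d = Finsupp.single l (d l)) := by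
        rw [diag_iff, diag_iff]
        constructor <;> intro h l' hl' <;> have := h l' hl' <;>
          simpa [Finsupp.tsub_apply, Finsupp.single_apply, (Ne.symm hl' : ¬ l = l')] using this
      rw [if_pos hdl, coeff_T, coeff_T]
      by_cases hd : d = Finsupp.single l (d l)
      · rw [if_pos (key.mpr hd), if_pos hd]; ring
      · rw [if_neg (fun h => hd (key.mp h)), if_neg hd]; ring
    · -- d l = 0
      have hdl' : d l = 0 := by
        by_contra h
        exact hdl (Finsupp.single_le_iff.mpr (by omega))
      rw [if_neg hdl, coeff_T]
      by_cases hd0 : d = 0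
      · subst hd0; rw [if_pos (by simp)]; simp
      · have : ¬ d = Finsupp.single l (d l) := by
          rw [hdl', Finsupp.single_zero]
          exact hd0
        rw [if_neg this, if_neg hd0]; ring
  have : (1 - MvPowerSeries.X l) * T l = T l - (MvPowerSeries.X l * T l) := by ring
  rw [this, hX]; ring

lemma inv_eq_T (l : Fin n) : (1 - MvPowerSeries.X l : MvPowerSeries (Fin n) ℚ)⁻¹ = T l := by
  have hc : MvPowerSeries.constantCoeff (1 - MvPowerSeries.X l : MvPowerSeries (Fin n) ℚ) ≠ 0 := by
    simp
  calc (1 - MvPowerSeries.X l : MvPowerSeries (Fin n) ℚ)⁻¹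
      = (1 - MvPowerSeries.X l)⁻¹ * ((1 - MvPowerSeries.X l) * T l) := by rw [geo, mul_one]
    _ = ((1 - MvPowerSeries.X l)⁻¹ * (1 - MvPowerSeries.X l)) * T l := by ring
    _ = T l := by rw [MvPowerSeries.inv_mul_cancel _ hc, one_mul]

/-- being a series in the single variable `l` -/
def OnVar (l : Fin n) (f : MvPowerSeries (Fin n) ℚ) : Prop :=
  ∀ d : Fin n →₀ ℕ, d ≠ Finsupp.single l (d l) → MvPowerSeries.coeff d f = 0

lemma onVar_one (l : Fin n) : OnVar l (1 : MvPowerSeries (Fin n) ℚ) := by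
  intro d hd
  rw [MvPowerSeries.coeff_one, if_neg]
  intro h; subst h; simp at hd

lemma onVar_T (l : Fin n) : OnVar l (T l) := by
  intro d hd
  rw [coeff_T, if_neg hd]

lemma onVar_X (l : Fin n) : OnVar l (MvPowerSeries.X l : MvPowerSeries (Fin n) ℚ) := by
  intro d hd
  rw [MvPowerSeries.coeff_X, if_neg]
  intro h; subst h; simp at hd

lemma OnVar.sub {l : Fin n} {f g : MvPowerSeries (Fin n) ℚ} (hf : OnVar l f) (hg : OnVar l g) :
    OnVar l (f - g) := by
  intro d hd
  rw [map_sub, hf d hd, hg d hd, sub_zero]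

lemma OnVar.mul {l : Fin n} {f g : MvPowerSeries (Fin n) ℚ} (hf : OnVar l f) (hg : OnVar l g) :
    OnVar l (f * g) := by
  intro d hd
  rw [MvPowerSeries.coeff_mul]
  apply Finset.sum_eq_zero
  rintro ⟨u, v⟩ huv
  rw [Finset.HasAntidiagonal.mem_antidiagonal] at huv
  by_cases hu : u = Finsupp.single l (u l)
  · by_cases hv : v = Finsupp.single l (v l)
    · exfalso
      apply hd
      have hd' : d = Finsupp.single l (u l + v l) := by
        rw [← huv]
        conv_lhs => rw [hu, hv]
        rw [← Finsupp.single_add]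
      rw [hd']; simp
    · rw [hg v hv, mul_zero]
  · rw [hf u hu, zero_mul]

lemma OnVar.pow {l : Fin n} {f : MvPowerSeries (Fin n) ℚ} (hf : OnVar l f) (a : ℕ) :
    OnVar l (f ^ a) := by
  induction a with
  | zero => simpa using onVar_one l
  | succ a ih => rw [pow_succ]; exact ih.mul hf

lemma onVar_one_sub_X (l : Fin n) : OnVar l (1 - MvPowerSeries.X l : MvPowerSeries (Fin n) ℚ) :=
  (onVar_one l).sub (onVar_X l)

/-- vanishing of high coefficients of powers of `1 - X l` -/
lemma coeff_one_sub_X_pow (l : Fin n) (a m' : ℕ) (h : a < m') :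
    MvPowerSeries.coeff (Finsupp.single l m')
      ((1 - MvPowerSeries.X l : MvPowerSeries (Fin n) ℚ) ^ a) = 0 := by
  induction a generalizing m' with
  | zero =>
    rw [pow_zero, MvPowerSeries.coeff_one, if_neg]
    intro hc
    have := Finsupp.single_eq_zero.mp hc
    omega
  | succ a ih =>
    have : ((1 - MvPowerSeries.X l : MvPowerSeries (Fin n) ℚ)) ^ (a+1)
        = (1 - MvPowerSeries.X l) ^ a - MvPowerSeries.X l * (1 - MvPowerSeries.X l) ^ a := by
      ring
    rw [this, map_sub, ih m' (by omega), coeff_X_mul, if_pos, zero_sub, neg_eq_zero]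
    · have hss : Finsupp.single l m' - Finsupp.single l 1 = Finsupp.single l (m' - 1) := by
        ext l'
        rcases eq_or_ne l' l with rfl | hl'
        · simp
        · simp [Finsupp.single_apply, (Ne.symm hl' : ¬ l = l')]
      rw [hss]
      exact ih (m' - 1) (by omega)
    · exact Finsupp.single_le_iff.mpr (by simp; omega)

lemma one_sub_pow_mul_T_pow (l : Fin n) (p q : ℕ) (hq : q ≤ p) :
    (1 - MvPowerSeries.X l : MvPowerSeries (Fin n) ℚ) ^ p * T l ^ q
      = (1 - MvPowerSeries.X l) ^ (p - q) := by
  have h1 : (1 - MvPowerSeries.X l : MvPowerSeries (Fin n) ℚ) ^ p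
      = (1 - MvPowerSeries.X l) ^ (p - q) * (1 - MvPowerSeries.X l) ^ q := by
    rw [← pow_add]; congr 1; omega
  rw [h1, mul_assoc, ← mul_pow, geo, one_pow, mul_one]

lemma coeff_diag_prod (m' : ℕ) (g : Fin n → MvPowerSeries (Fin n) ℚ)
    (hg : ∀ l, OnVar l (g l)) :
    MvPowerSeries.coeff (Finsupp.equivFunOnFinite.symm fun _ => m') (∏ l, g l)
      = ∏ l, MvPowerSeries.coeff (Finsupp.single l m') (g l) := by
  classical
  rw [MvPowerSeries.coeff_prod]
  set e : Fin n →₀ ℕ := Finsupp.equivFunOnFinite.symm fun _ => m' with he_def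
  have he : ∀ l', e l' = m' := fun l' => rfl
  set p0 : Fin n →₀ (Fin n →₀ ℕ) :=
    Finsupp.equivFunOnFinite.symm fun l => Finsupp.single l m' with hp0_def
  have hp0 : ∀ l, p0 l = Finsupp.single l m' := fun l => rfl
  have hmem : p0 ∈ Finset.finsuppAntidiag (univ : Finset (Fin n)) e := by
    rw [Finset.mem_finsuppAntidiag]
    refine ⟨?_, Finset.subset_univ _⟩
    ext l'
    rw [Finsupp.finset_sum_apply]
    simp only [hp0, he, Finsupp.single_apply]
    simp
  rw [Finset.sum_eq_single_of_mem p0 hmem]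
  · exact Finset.prod_congr rfl fun l _ => by rw [hp0]
  · intro p hp hne
    by_cases hall : ∀ l, p l = Finsupp.single l ((p l) l)
    · exfalso
      apply hne
      have hsum := (Finset.mem_finsuppAntidiag.mp hp).1
      have hval : ∀ l', (p l') l' = m' := by
        intro l'
        have h2 : (Finset.univ.sum p) l' = e l' := by rw [hsum]
        rw [Finsupp.finset_sum_apply, he] at h2
        calc (p l') l' = ∑ l, (p l) l' := by
              symm
              rw [Finset.sum_eq_single_of_mem l' (Finset.mem_univ l')]
              intro l hl hll
              rw [hall l, Finsupp.single_apply, if_neg hll]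
            _ = m' := h2
      ext l
      rw [hall l, hval l, hp0]
    · push_neg at hall
      obtain ⟨l, hl⟩ := hall
      exact Finset.prod_eq_zero (Finset.mem_univ l) (hg l (p l) hl)

lemma support_prod_exists {ι : Type*} [DecidableEq ι] (s : Finset ι)
    (f : ι → MvPolynomial (Fin n) ℚ) (β : Fin n →₀ ℕ)
    (hβ : β ∈ (∏ i ∈ s, f i).support) :
    ∃ g : ι → (Fin n →₀ ℕ), (∀ i ∈ s, g i ∈ (f i).support) ∧ β = ∑ i ∈ s, g i := by
  classical
  induction s using Finset.induction_on generalizing β with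
  | empty =>
    refine ⟨fun _ => 0, by simp, ?_⟩
    rw [Finset.prod_empty] at hβ
    rw [Finset.sum_empty]
    have := MvPolynomial.mem_support_iff.mp hβ
    by_contra hb0
    rw [MvPolynomial.coeff_one, if_neg (fun h => hb0 h.symm)] at this
    exact this rfl
  | @insert a s' ha ih =>
    rw [Finset.prod_insert ha] at hβ
    have hmem := MvPolynomial.support_mul _ _ hβ
    rw [Finset.mem_add] at hmem
    obtain ⟨u, hu, v, hv, huv⟩ := hmem
    obtain ⟨g', hg', rfl⟩ := ih v hv
    refine ⟨fun i => if i = a then u else g' i, ?_, ?_⟩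
    · intro i hi
      rcases Finset.mem_insert.mp hi with rfl | hi'
      · simpa using hu
      · have hne : i ≠ a := fun h => ha (h ▸ hi')
        simpa [hne] using hg' i hi'
    · rw [Finset.sum_insert ha, ← huv]
      congr 1
      · simp
      · refine Finset.sum_congr rfl fun i hi => ?_
        have hne : i ≠ a := fun h => ha (h ▸ hi)
        simp [hne]

lemma support_X_sub_X (i j : Fin n) (γ : Fin n →₀ ℕ)
    (hγ : γ ∈ (MvPolynomial.X j - MvPolynomial.X i : MvPolynomial (Fin n) ℚ).support) :
    γ = Finsupp.single i 1 ∨ γ = Finsupp.single j 1 := by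
  have := MvPolynomial.support_sub _ _ _ hγ
  rw [Finset.mem_union, MvPolynomial.support_X, MvPolynomial.support_X] at this
  rcases this with h | h
  · right; exact Finset.mem_singleton.mp h
  · left; exact Finset.mem_singleton.mp h

/-- weight of a monomial on a set of variables -/
def w (Tset : Finset (Fin n)) (γ : Fin n →₀ ℕ) : ℕ := ∑ l ∈ Tset, γ l

lemma w_sum {ι : Type*} (Tset : Finset (Fin n)) (s : Finset ι) (g : ι → (Fin n →₀ ℕ)) :
    w Tset (∑ i ∈ s, g i) = ∑ i ∈ s, w Tset (g i) := by
  simp only [w, Finsupp.finset_sum_apply]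
  exact Finset.sum_comm

lemma w_single (Tset : Finset (Fin n)) (v : Fin n) :
    w Tset (Finsupp.single v 1) = if v ∈ Tset then 1 else 0 := by
  simp [w, Finsupp.single_apply, Finset.sum_ite_eq]

lemma w_pairpow {i j : Fin n} {Tset : Finset (Fin n)} (hi : i ∈ Tset) (hj : j ∈ Tset)
    (k : ℕ) (γ : Fin n →₀ ℕ)
    (hγ : γ ∈ ((MvPolynomial.X j - MvPolynomial.X i : MvPolynomial (Fin n) ℚ) ^ (2 * k)).support) :
    w Tset γ = 2 * k := by
  have hrw : ((MvPolynomial.X j - MvPolynomial.X i : MvPolynomial (Fin n) ℚ)) ^ (2 * k)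
      = ∏ _r ∈ Finset.range (2 * k),
          (MvPolynomial.X j - MvPolynomial.X i : MvPolynomial (Fin n) ℚ) := by
    rw [Finset.prod_const, Finset.card_range]
  rw [hrw] at hγ
  obtain ⟨g, hg, rfl⟩ := support_prod_exists _ _ _ hγ
  rw [w_sum]
  rw [Finset.sum_congr rfl (fun r hr => ?_), Finset.sum_const, Finset.card_range,
    smul_eq_mul, mul_one]
  rcases support_X_sub_X _ _ _ (hg r hr) with h | h <;>
    rw [h, w_single] <;> simp [hi, hj]

/-- number of ordered pairs `(i,j)` with `i < j` inside `Tset` -/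
def cardPairs (Tset : Finset (Fin n)) : ℕ :=
  ((Tset ×ˢ Tset).filter fun p => p.1 < p.2).card

lemma two_mul_cardPairs (Tset : Finset (Fin n)) :
    2 * cardPairs Tset + Tset.card = Tset.card * Tset.card := by
  classical
  have hlt_gt : cardPairs Tset = ((Tset ×ˢ Tset).filter fun p => p.2 < p.1).card := by
    unfold cardPairs
    apply Finset.card_bij' (fun p _ => Prod.swap p) (fun p _ => Prod.swap p)
    · intro p hp
      simp only [Finset.mem_filter, Finset.mem_product] at hp ⊢
      exact ⟨⟨hp.1.2, hp.1.1⟩, hp.2⟩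
    · intro p hp
      simp only [Finset.mem_filter, Finset.mem_product] at hp ⊢
      exact ⟨⟨hp.1.2, hp.1.1⟩, hp.2⟩
    · intro p _; simp
    · intro p _; simp
  have hdisj : Disjoint ((Tset ×ˢ Tset).filter fun p => p.1 < p.2)
      ((Tset ×ˢ Tset).filter fun p => p.2 < p.1) := by
    rw [Finset.disjoint_left]
    intro p hp hp'
    simp only [Finset.mem_filter] at hp hp'
    exact absurd hp'.2 (not_lt_of_gt hp.2)
  have hunion : ((Tset ×ˢ Tset).filter fun p => p.1 < p.2)
      ∪ ((Tset ×ˢ Tset).filter fun p => p.2 < p.1) = Tset.offDiag := by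
    ext p
    simp only [Finset.mem_union, Finset.mem_filter, Finset.mem_offDiag, Finset.mem_product]
    constructor
    · rintro (⟨⟨h1, h2⟩, h3⟩ | ⟨⟨h1, h2⟩, h3⟩)
      · exact ⟨h1, h2, ne_of_lt h3⟩
      · exact ⟨h1, h2, (ne_of_lt h3).symm⟩
    · rintro ⟨h1, h2, h3⟩
      rcases lt_or_gt_of_ne h3 with h | h
      · exact Or.inl ⟨⟨h1, h2⟩, h⟩
      · exact Or.inr ⟨⟨h1, h2⟩, h⟩
  have hcard := Finset.card_union_of_disjoint hdisj
  rw [hunion, Finset.offDiag_card] at hcard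
  have hle : Tset.card ≤ Tset.card * Tset.card := by
    rcases Nat.eq_zero_or_pos Tset.card with h | h
    · simp [h]
    · exact Nat.le_mul_of_pos_left _ h
  rw [← hlt_gt] at hcard
  unfold cardPairs at hcard ⊢
  generalize Tset.card * Tset.card = cc at hcard hle ⊢
  omega

/-- the pairs `i < j` among all variables -/
def Pairs (n : ℕ) : Finset (Fin n × Fin n) := Finset.univ.filter fun p => p.1 < p.2

/-- the polynomial `∏_{i<j} (Y j - Y i)^(2k)` -/
def Qpoly (n k : ℕ) : MvPolynomial (Fin n) ℚ :=
  ∏ p ∈ Pairs n, (MvPolynomial.X p.2 - MvPolynomial.X p.1) ^ (2 * k)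

lemma Q_weight (k : ℕ) (β : Fin n →₀ ℕ) (hβ : β ∈ (Qpoly n k).support) :
    (∀ Tset : Finset (Fin n), 2 * k * cardPairs Tset ≤ w Tset β)
      ∧ w (Finset.univ : Finset (Fin n)) β = 2 * k * cardPairs (Finset.univ : Finset (Fin n)) := by
  classical
  obtain ⟨g, hg, rfl⟩ := support_prod_exists (Pairs n) _ β hβ
  have huniv : ∀ Tset : Finset (Fin n),
      ((Tset ×ˢ Tset).filter fun p => p.1 < p.2)
        = (Pairs n).filter fun p => p.1 ∈ Tset ∧ p.2 ∈ Tset := by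
    intro Tset
    ext p
    simp only [Finset.mem_filter, Finset.mem_product, Pairs, Finset.mem_univ, true_and]
    tauto
  have hcardT : ∀ Tset : Finset (Fin n),
      cardPairs Tset = ((Pairs n).filter fun p => p.1 ∈ Tset ∧ p.2 ∈ Tset).card := by
    intro Tset
    unfold cardPairs
    rw [huniv Tset]
  constructor
  · intro Tset
    rw [w_sum]
    have hsub : (Pairs n).filter (fun p => p.1 ∈ Tset ∧ p.2 ∈ Tset) ⊆ Pairs n :=
      Finset.filter_subset _ _
    calc 2 * k * cardPairs Tset
        = ∑ p ∈ (Pairs n).filter (fun p => p.1 ∈ Tset ∧ p.2 ∈ Tset), 2 * k := by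
          rw [Finset.sum_const, smul_eq_mul, hcardT Tset, mul_comm]
      _ = ∑ p ∈ (Pairs n).filter (fun p => p.1 ∈ Tset ∧ p.2 ∈ Tset), w Tset (g p) := by
          refine Finset.sum_congr rfl fun p hp => ?_
          rw [Finset.mem_filter] at hp
          exact (w_pairpow hp.2.1 hp.2.2 k (g p) (hg p hp.1)).symm
      _ ≤ ∑ p ∈ Pairs n, w Tset (g p) :=
          Finset.sum_le_sum_of_subset hsub
  · rw [w_sum]
    calc ∑ p ∈ Pairs n, w Finset.univ (g p)
        = ∑ p ∈ Pairs n, 2 * k := by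
          refine Finset.sum_congr rfl fun p hp => ?_
          exact w_pairpow (Finset.mem_univ _) (Finset.mem_univ _) k (g p) (hg p hp)
      _ = 2 * k * cardPairs (Finset.univ : Finset (Fin n)) := by
          have hU : cardPairs (Finset.univ : Finset (Fin n)) = (Pairs n).card := by
            rw [hcardT Finset.univ]
            congr 1
            apply Finset.filter_true_of_mem
            intro p _
            exact ⟨Finset.mem_univ _, Finset.mem_univ _⟩
          rw [Finset.sum_const, smul_eq_mul, hU, mul_comm]

/-- pure integer arithmetic core of the vanishing argument -/
lemma comb_int (K N B H M S sc tc SZ TZ cpU cpT : ℤ)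
    (e1 : SZ + TZ = 2 * K * cpU) (e2 : 2 * cpU + N = N * N) (e3 : 2 * cpT + tc = tc * tc)
    (e4 : 2 * K * cpT ≤ TZ) (e5 : TZ + tc * (B + 1) ≤ tc * H)
    (e6 : sc * (H + M) ≤ SZ + sc * B)
    (e7 : sc + tc = N) (e8 : M = (N - 1) * K + B) (e9 : S * K < H) (e10 : H ≤ S * K + B)
    (e11 : S + 1 ≤ N) (e12 : 1 ≤ K) (e13 : 1 ≤ N)
    (hS0 : 0 ≤ S) (hsc0 : 0 ≤ sc) (htc0 : 0 ≤ tc) (hSZ0 : 0 ≤ SZ) (hTZ0 : 0 ≤ TZ)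
    (hzero : sc = 0 → SZ = 0) : False := by
  rcases eq_or_lt_of_le hsc0 with hsc | hsc
  · -- sc = 0
    have hSZ : SZ = 0 := hzero hsc.symm
    have htc : tc = N := by linarith
    have hcpU : 2 * cpU = N * N - N := by linarith
    have h5 : K * (2 * cpU) = K * (N * N - N) := by rw [hcpU]
    have hTZval : 2 * TZ = 2 * K * (N * N - N) := by linarith [e1, hSZ, h5]
    rw [htc] at e5
    have z2 : N * H ≤ N * (S * K + B) := mul_le_mul_of_nonneg_left e10 (by linarith)
    have z3 : N * (S * K) ≤ N * ((N - 1) * K) := by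
      apply mul_le_mul_of_nonneg_left _ (by linarith)
      apply mul_le_mul_of_nonneg_right (by linarith) (by linarith)
    linarith [e5, z2, z3, hTZval, e13]
  · -- sc ≥ 1
    have key1 : sc * ((S + N - 1) * K + 1) ≤ K * sc * (2 * N - sc - 1) := by
      have hST : sc * ((S + N - 1) * K + 1) ≤ sc * (H + M - B) := by
        apply mul_le_mul_of_nonneg_left _ hsc0
        rw [e8]; linarith
      have hST2 : sc * (H + M - B) ≤ SZ := by linarith [e6]
      have hSZub : SZ ≤ 2 * K * cpU - TZ := by linarith
      have hcalc : 2 * ((2:ℤ) * K * cpU - 2 * K * cpT) = 2 * (K * sc * (2 * N - sc - 1)) := by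
        have h2U : 2 * cpU = N * N - N := by linarith
        have h2T : 2 * cpT = tc * tc - tc := by linarith
        have htc' : tc = N - sc := by linarith
        calc 2 * ((2:ℤ) * K * cpU - 2 * K * cpT)
            = 2 * K * (2 * cpU) - 2 * K * (2 * cpT) := by ring
          _ = 2 * K * (N * N - N) - 2 * K * (tc * tc - tc) := by rw [h2U, h2T]
          _ = 2 * (K * sc * (2 * N - sc - 1)) := by rw [htc']; ring
      linarith [hST, hST2, hSZub, e4, hcalc]
    have key2 : S + sc ≤ N - 1 := by
      by_contra hcon2
      push_neg at hcon2
      have h1 : (0:ℤ) ≤ K * sc := mul_nonneg (by linarith) (by linarith)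
      have h2 : N - sc - S ≤ 0 := by linarith
      have hprod : K * sc * (N - sc - S) ≤ 0 := by
        calc K * sc * (N - sc - S) = (K * sc) * (N - sc - S) := by ring
          _ ≤ 0 := mul_nonpos_of_nonneg_of_nonpos h1 h2
      linarith [key1, hprod, hsc]
    have htcs : S + 1 ≤ tc := by linarith
    have c1 : K * (tc * tc - tc) ≤ TZ := by
      have h3 : K * (2 * cpT + tc) = K * (tc * tc) := by rw [e3]
      linarith [h3, e4]
    have c2 : TZ ≤ tc * (S * K) - tc := by
      have hth := mul_le_mul_of_nonneg_left e10 htc0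
      linarith [e5, hth]
    have c3 : K * (tc * S) ≤ K * (tc * (tc - 1)) := by
      apply mul_le_mul_of_nonneg_left _ (by linarith)
      apply mul_le_mul_of_nonneg_left (by linarith) htc0
    linarith [c1, c2, c3, htcs]

/-- The key combinatorial lemma: in the "gap" case every monomial of `Qpoly` has
some variable whose exponent falls in the middle range. -/
lemma comb (k b h m s : ℕ) (hk : 1 ≤ k) (hn : 1 ≤ n) (hsn : s + 1 ≤ n)
    (hs1 : s * k < h) (hs2 : h ≤ s * k + b) (hm : m = (n - 1) * k + b)
    (β : Fin n →₀ ℕ)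
    (hlow : ∀ Tset : Finset (Fin n), 2 * k * cardPairs Tset ≤ w Tset β)
    (htot : w (Finset.univ : Finset (Fin n)) β = 2 * k * cardPairs (Finset.univ : Finset (Fin n))) :
    ∃ l, h ≤ β l + b ∧ β l + b < h + m := by
  classical
  by_contra hcon
  push_neg at hcon
  set Sf := Finset.univ.filter fun l : Fin n => h + m ≤ β l + b with hSf
  set Tf := Finset.univ.filter fun l : Fin n => ¬ (h + m ≤ β l + b) with hTf
  have hTf_bound : ∀ l ∈ Tf, β l + b + 1 ≤ h := by
    intro l hl
    rw [hTf, Finset.mem_filter] at hl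
    have := hcon l
    omega
  have hSf_bound : ∀ l ∈ Sf, h + m ≤ β l + b := by
    intro l hl
    rw [hSf, Finset.mem_filter] at hl
    exact hl.2
  have hcard_split : Sf.card + Tf.card = n := by
    rw [hSf, hTf, Finset.card_filter_add_card_filter_not, Finset.card_univ,
      Fintype.card_fin]
  have hsum_split : (∑ l ∈ Sf, β l) + (∑ l ∈ Tf, β l) = ∑ l, β l :=
    Finset.sum_filter_add_sum_filter_not Finset.univ _ _
  -- upper bound on the Tf-sum
  have hT_up : (∑ l ∈ Tf, β l) + Tf.card * (b + 1) ≤ Tf.card * h := by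
    calc (∑ l ∈ Tf, β l) + Tf.card * (b + 1) = ∑ l ∈ Tf, (β l + (b+1)) := by
          rw [Finset.sum_add_distrib, Finset.sum_const, smul_eq_mul]
      _ ≤ ∑ l ∈ Tf, h := Finset.sum_le_sum (fun l hl => by have := hTf_bound l hl; omega)
      _ = Tf.card * h := by rw [Finset.sum_const, smul_eq_mul]
  -- lower bound on the Sf-sum
  have hS_low : Sf.card * (h + m) ≤ (∑ l ∈ Sf, β l) + Sf.card * b := by
    calc Sf.card * (h + m) = ∑ l ∈ Sf, (h + m) := by rw [Finset.sum_const, smul_eq_mul]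
      _ ≤ ∑ l ∈ Sf, (β l + b) := Finset.sum_le_sum hSf_bound
      _ = (∑ l ∈ Sf, β l) + Sf.card * b := by
          rw [Finset.sum_add_distrib, Finset.sum_const, smul_eq_mul]
  have hT_low : 2 * k * cardPairs Tf ≤ ∑ l ∈ Tf, β l := hlow Tf
  have hcpT := two_mul_cardPairs Tf
  have hcpU := two_mul_cardPairs (Finset.univ : Finset (Fin n))
  rw [Finset.card_univ, Fintype.card_fin] at hcpU
  have htot' : (∑ l, β l) = 2 * k * cardPairs Finset.univ := htot
  -- move to the integers
  have e1 : ((∑ l ∈ Sf, β l : ℕ) : ℤ) + (∑ l ∈ Tf, β l : ℕ)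
      = 2 * k * cardPairs (Finset.univ : Finset (Fin n)) := by exact_mod_cast hsum_split.trans htot'
  have e2 : 2 * (cardPairs (Finset.univ : Finset (Fin n)) : ℤ) + n = n * n := by
    exact_mod_cast hcpU
  have e3 : 2 * (cardPairs Tf : ℤ) + Tf.card = Tf.card * Tf.card := by exact_mod_cast hcpT
  have e4 : 2 * (k : ℤ) * cardPairs Tf ≤ (∑ l ∈ Tf, β l : ℕ) := by exact_mod_cast hT_low
  have e5 : ((∑ l ∈ Tf, β l : ℕ) : ℤ) + Tf.card * (b + 1) ≤ Tf.card * h := by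
    exact_mod_cast hT_up
  have e6 : (Sf.card : ℤ) * (h + m) ≤ (∑ l ∈ Sf, β l : ℕ) + Sf.card * b := by
    exact_mod_cast hS_low
  have e7 : (Sf.card : ℤ) + Tf.card = n := by exact_mod_cast hcard_split
  have e8 : (m : ℤ) = ((n : ℤ) - 1) * k + b := by
    have : ((n : ℕ) - 1 : ℕ) = ((n : ℤ) - 1).toNat := by omega
    rw [hm]
    push_cast [this]
    rw [Int.toNat_of_nonneg (by omega)]
  have e9 : (s : ℤ) * k < h := by exact_mod_cast hs1
  have e10 : (h : ℤ) ≤ s * k + b := by exact_mod_cast hs2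
  have e11 : (s : ℤ) + 1 ≤ n := by exact_mod_cast hsn
  have e12 : (1 : ℤ) ≤ k := by exact_mod_cast hk
  have e13 : (1 : ℤ) ≤ n := by exact_mod_cast hn
  have e9 : (s : ℤ) * k < h := by exact_mod_cast hs1
  have e10 : (h : ℤ) ≤ s * k + b := by exact_mod_cast hs2
  have e11 : (s : ℤ) + 1 ≤ n := by exact_mod_cast hsn
  have e12 : (1 : ℤ) ≤ k := by exact_mod_cast hk
  have e13 : (1 : ℤ) ≤ n := by exact_mod_cast hn
  exact comb_int k n b h m s (Sf.card) (Tf.card) ((∑ l ∈ Sf, β l : ℕ) : ℤ)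
    ((∑ l ∈ Tf, β l : ℕ) : ℤ)
    ((cardPairs (Finset.univ : Finset (Fin n)) : ℕ) : ℤ) ((cardPairs Tf : ℕ) : ℤ)
    e1 e2 e3 e4 e5 e6 e7 e8 e9 e10 e11 e12 e13
    (Int.natCast_nonneg _) (Int.natCast_nonneg _) (Int.natCast_nonneg _)
    (Int.natCast_nonneg _) (Int.natCast_nonneg _)
    (by
      intro hsc
      have hSf_card : Sf.card = 0 := by exact_mod_cast hsc
      have hSf_empty : Sf = ∅ := Finset.card_eq_zero.mp hSf_card
      rw [hSf_empty, Finset.sum_empty, Nat.cast_zero])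

lemma prod_pairs {M : Type*} [CommMonoid M] (f : Fin n → Fin n → M) :
    ∏ p ∈ Pairs n, f p.1 p.2
      = ∏ i : Fin n, ∏ j ∈ Finset.univ.filter (fun j => i < j), f i j := by
  rw [Pairs, ← Finset.univ_product_univ, Finset.prod_filter,
    Finset.prod_product' (f := fun i j => if i < j then f i j else 1)]
  exact Finset.prod_congr rfl fun i _ => (Finset.prod_filter _ _).symm

end

end MorrisAux

open MorrisAux

/-- **Contrapositive vanishing lemma for the Morris identity.**  Let `k ≥ b` and
`1 ≤ h ≤ nk`.  If the coefficient of `x_1^(m_1) ⋯ x_n^(m_n)` with `m_i = (n-1)k + b` in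
`∏_{1≤i<j≤n}(x_i-x_j)^(2k) / ∏_l (1-x_l)^(h-b)` (expanded by the binomial series)
is nonzero, then there is `0 ≤ t ≤ n` with `(t-1)k + b < h ≤ tk`. -/
theorem morris_vanishing_contrapositive (n b k h : ℕ) (hkb : b ≤ k)
    (h1 : 1 ≤ h) (h2 : h ≤ n * k)
    (hne : MvPowerSeries.coeff
      (Finsupp.equivFunOnFinite.symm (fun _ : Fin n => (n - 1) * k + b))
      ((∏ i : Fin n, ∏ j ∈ Finset.univ.filter (fun j => i < j),
          (MvPowerSeries.X i - MvPowerSeries.X j : MvPowerSeries (Fin n) ℚ) ^ (2 * k)) *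
        ∏ l : Fin n,
          ((1 - MvPowerSeries.X l : MvPowerSeries (Fin n) ℚ)⁻¹) ^ (((h : ℤ) - b).toNat) *
            (1 - MvPowerSeries.X l : MvPowerSeries (Fin n) ℚ) ^ (((b : ℤ) - h).toNat)) ≠ 0) :
    ∃ t : ℕ, t ≤ n ∧ ((t : ℤ) - 1) * k + b < (h : ℤ) ∧ (h : ℤ) ≤ (t : ℤ) * k := by
  classical
  by_contra hcon
  push_neg at hcon
  -- basic facts
  have hk1 : 1 ≤ k := by
    rcases Nat.eq_zero_or_pos k with rfl | hk
    · rw [Nat.mul_zero] at h2; omega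
    · exact hk
  have hn1 : 1 ≤ n := by
    rcases Nat.eq_zero_or_pos n with rfl | hn
    · rw [Nat.zero_mul] at h2; omega
    · exact hn
  -- find the gap index s
  obtain ⟨s, hsn, hs1, hs2⟩ : ∃ s : ℕ, s + 1 ≤ n ∧ s * k < h ∧ h ≤ s * k + b := by
    have hex : ∃ t, h ≤ t * k := ⟨n, h2⟩
    set t0 := Nat.find hex with ht0def
    have ht0 : h ≤ t0 * k := Nat.find_spec hex
    have ht0n : t0 ≤ n := Nat.find_min' hex h2
    have ht0pos : t0 ≠ 0 := by
      intro h0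
      rw [h0, Nat.zero_mul] at ht0; omega
    have hmin : ¬ (h ≤ (t0 - 1) * k) := Nat.find_min hex (by omega)
    have hfail := hcon t0 ht0n
    have hle : (h : ℤ) ≤ (t0 : ℤ) * k := by exact_mod_cast ht0
    have hup : ¬ (((t0 : ℤ) - 1) * k + b < (h : ℤ)) := fun hc => absurd hle (by
      have := hfail hc; omega)
    push_neg at hup
    refine ⟨t0 - 1, by omega, by omega, ?_⟩
    have : ((t0 : ℤ) - 1) = ((t0 - 1 : ℕ) : ℤ) := by omega
    rw [this] at hup
    exact_mod_cast hup
  -- notation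
  set m : ℕ := (n - 1) * k + b with hm
  set q : ℕ := ((h : ℤ) - b).toNat with hq
  set r : ℕ := ((b : ℤ) - h).toNat with hr
  apply hne
  -- replace the inverse by the explicit geometric series
  simp only [inv_eq_T]
  -- rewrite the Vandermonde part as the image of `Qpoly`
  have hnum : (∏ i : Fin n, ∏ j ∈ Finset.univ.filter (fun j => i < j),
      (MvPowerSeries.X i - MvPowerSeries.X j : MvPowerSeries (Fin n) ℚ) ^ (2 * k))
      = MvPolynomial.aeval (fun l => 1 - MvPowerSeries.X l) (Qpoly n k) := by
    rw [Qpoly, map_prod, ← prod_pairs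
      (f := fun i j => (MvPowerSeries.X i - MvPowerSeries.X j : MvPowerSeries (Fin n) ℚ) ^ (2*k))]
    refine Finset.prod_congr rfl fun p _ => ?_
    rw [map_pow, map_sub, MvPolynomial.aeval_X, MvPolynomial.aeval_X]
    ring
  rw [hnum]
  -- expand `Qpoly` monomial by monomial
  have hQ : (MvPolynomial.aeval (fun l => 1 - MvPowerSeries.X l) (Qpoly n k)
        : MvPowerSeries (Fin n) ℚ)
      = ∑ β ∈ (Qpoly n k).support, MvPolynomial.coeff β (Qpoly n k)
          • ∏ l : Fin n, (1 - MvPowerSeries.X l) ^ (β l) := by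
    conv_lhs => rw [(Qpoly n k).as_sum]
    rw [map_sum]
    refine Finset.sum_congr rfl fun β hβ => ?_
    rw [MvPolynomial.aeval_monomial, Finsupp.prod_fintype _ _ (fun i => pow_zero _),
      ← Algebra.smul_def]
  rw [hQ, Finset.sum_mul]
  rw [map_sum]
  apply Finset.sum_eq_zero
  intro β hβ
  rw [smul_mul_assoc, ← Finset.prod_mul_distrib]
  rw [LinearMap.map_smul]
  -- the diagonal coefficient of the product factorizes
  have hfact := coeff_diag_prod ((n-1)*k + b)
    (fun l => (1 - MvPowerSeries.X l) ^ (β l) * (T l ^ q * (1 - MvPowerSeries.X l) ^ r))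
    (fun l => (((onVar_one_sub_X l).pow (β l))).mul
      (((onVar_T l).pow q).mul ((onVar_one_sub_X l).pow r)))
  beta_reduce at hfact
  rw [hfact]
  -- find the vanishing factor
  obtain ⟨hlow, htot⟩ := Q_weight k β hβ
  obtain ⟨l₀, hl₀1, hl₀2⟩ := comb k b h m s hk1 hn1 hsn hs1 hs2 hm β hlow htot
  have hql : q ≤ β l₀ + r := by omega
  have hexp : β l₀ + r - q < m := by omega
  have hcomb : (1 - MvPowerSeries.X l₀ : MvPowerSeries (Fin n) ℚ) ^ (β l₀)
        * (T l₀ ^ q * (1 - MvPowerSeries.X l₀) ^ r)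
      = (1 - MvPowerSeries.X l₀) ^ (β l₀ + r) * T l₀ ^ q := by
    rw [pow_add]; ring
  rw [Finset.prod_eq_zero (Finset.mem_univ l₀), smul_zero]
  rw [hcomb, one_sub_pow_mul_T_pow l₀ _ _ hql]
  exact coeff_one_sub_X_pow l₀ _ _ hexp
end

section
/- For positive integers $a_0, a_1, \ldots, a_n$, the Dyson product satisfies the recursion $D_n(x; a_0, a_1, \ldots, a_n) = \sum_{i=0}^n D_n(x; a_0, \ldots, a_{i-1}, a_i - 1, a_{i+1}, \ldots, a_n)$, where $D_n(x; a_0, \ldots, a_n) = \prod_{0\le i\ne j\le n}(1-x_i/x_j)^{a_j}$. -/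
open MvPolynomial Finset

/-- Leading coefficient of a Lagrange basis polynomial. -/
lemma coeff_lagrange_basis {K : Type*} [Field K] {n : ℕ} (v : Fin (n + 1) → K)
    (hv : Function.Injective v) (i : Fin (n + 1)) :
    (Lagrange.basis Finset.univ v i).coeff n = (∏ l ∈ Finset.univ.erase i, (v i - v l))⁻¹ := by
  have hinj : Set.InjOn v (Finset.univ : Finset (Fin (n + 1))) := hv.injOn
  have hdeg : (Lagrange.basis Finset.univ v i).natDegree = n := by
    rw [Lagrange.natDegree_basis hinj (mem_univ i)]; simp
  have hne : Lagrange.basis Finset.univ v i ≠ 0 := Lagrange.basis_ne_zero hinj (mem_univ i)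
  have : (Lagrange.basis Finset.univ v i).coeff n =
      (Lagrange.basis Finset.univ v i).leadingCoeff := by
    rw [Polynomial.leadingCoeff, hdeg]
  rw [this, Lagrange.basis, Polynomial.leadingCoeff_prod]
  rw [← Finset.prod_inv_distrib]
  refine Finset.prod_congr rfl fun l hl => ?_
  rw [Lagrange.basisDivisor]
  rw [Polynomial.leadingCoeff_mul, Polynomial.leadingCoeff_C,
    (Polynomial.monic_X_sub_C _).leadingCoeff, mul_one]

/-- Key Lagrange identity: `∑ i, v i ^ n / ∏_{l ≠ i} (v i - v l) = 1`. -/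
lemma lagrange_sum_key {K : Type*} [Field K] {n : ℕ} (v : Fin (n + 1) → K)
    (hv : Function.Injective v) :
    ∑ i : Fin (n + 1), v i ^ n * (∏ l ∈ Finset.univ.erase i, (v i - v l))⁻¹ = 1 := by
  have hinj : Set.InjOn v (Finset.univ : Finset (Fin (n + 1))) := hv.injOn
  have hdeg : ((Polynomial.X : Polynomial K) ^ n).degree <
      (Finset.univ : Finset (Fin (n + 1))).card := by
    simp [Polynomial.degree_X_pow]
    exact_mod_cast Nat.lt_succ_self n
  have h := Lagrange.eq_interpolate (f := (Polynomial.X : Polynomial K) ^ n) hinj hdeg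
  have hc := congrArg (fun p => Polynomial.coeff p n) h
  simp only [Lagrange.interpolate_apply, Polynomial.finset_sum_coeff, Polynomial.coeff_C_mul,
    Polynomial.coeff_X_pow, if_pos rfl, Polynomial.eval_pow, Polynomial.eval_X] at hc
  simp only [if_true] at hc; rw [eq_comm] at hc
  rw [← hc]
  refine Finset.sum_congr rfl fun i _ => ?_
  rw [coeff_lagrange_basis v hv i]

/-- `∑ i, (∏_{l ≠ i} (1 - v l / v i))⁻¹ = 1` for distinct nonzero `v i`. -/
lemma sum_inv_prod_one_sub_div {K : Type*} [Field K] {n : ℕ} (v : Fin (n + 1) → K)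
    (hv : Function.Injective v) (h0 : ∀ i, v i ≠ 0) :
    ∑ i : Fin (n + 1), (∏ l ∈ Finset.univ.erase i, (1 - v l / v i))⁻¹ = 1 := by
  calc ∑ i : Fin (n + 1), (∏ l ∈ Finset.univ.erase i, (1 - v l / v i))⁻¹
      = ∑ i : Fin (n + 1), v i ^ n * (∏ l ∈ Finset.univ.erase i, (v i - v l))⁻¹ := by
        refine Finset.sum_congr rfl fun i _ => ?_
        have hcard : (Finset.univ.erase i).card = n := by simp
        have hconst : (∏ _l ∈ Finset.univ.erase i, v i) = v i ^ n := by
          rw [Finset.prod_const, hcard]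
        have : ∏ l ∈ Finset.univ.erase i, (1 - v l / v i)
            = (∏ l ∈ Finset.univ.erase i, (v i - v l)) / v i ^ n := by
          rw [← hconst, ← Finset.prod_div_distrib]
          refine Finset.prod_congr rfl fun l _ => ?_
          field_simp [h0 i]
        rw [this, inv_div, div_eq_mul_inv]
    _ = 1 := lagrange_sum_key v hv

/-- **Good's recursion.**  For positive integers `a_0, …, a_n`, the Dyson product
`D_n(x; a_0,…,a_n) = ∏_{0≤i≠j≤n} (1 - x_i/x_j)^(a_j)` (viewed in the field of rational
functions in `x_0,…,x_n`) satisfies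
`D_n(x; a) = ∑_{i=0}^n D_n(x; a_0, …, a_i - 1, …, a_n)`. -/
theorem good_recursion (n : ℕ) (a : Fin (n + 1) → ℕ) (ha : ∀ i, 1 ≤ a i) :
    (∏ j : Fin (n + 1), ∏ i ∈ Finset.univ.erase j,
        (1 - algebraMap (MvPolynomial (Fin (n + 1)) ℚ)
              (FractionRing (MvPolynomial (Fin (n + 1)) ℚ)) (X i) /
            algebraMap (MvPolynomial (Fin (n + 1)) ℚ)
              (FractionRing (MvPolynomial (Fin (n + 1)) ℚ)) (X j)) ^ (a j))
      = ∑ i : Fin (n + 1),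
          ∏ j : Fin (n + 1), ∏ l ∈ Finset.univ.erase j,
            (1 - algebraMap (MvPolynomial (Fin (n + 1)) ℚ)
                  (FractionRing (MvPolynomial (Fin (n + 1)) ℚ)) (X l) /
                algebraMap (MvPolynomial (Fin (n + 1)) ℚ)
                  (FractionRing (MvPolynomial (Fin (n + 1)) ℚ)) (X j)) ^
              (Function.update a i (a i - 1) j) := by
  set K := FractionRing (MvPolynomial (Fin (n + 1)) ℚ)
  set t : Fin (n + 1) → K :=
    fun i => algebraMap (MvPolynomial (Fin (n + 1)) ℚ) K (X i) with ht
  have halg : Function.Injective (algebraMap (MvPolynomial (Fin (n + 1)) ℚ) K) :=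
    IsFractionRing.injective _ _
  have htinj : Function.Injective t := fun i j h => by
    have := halg h
    exact MvPolynomial.X_injective this
  have ht0 : ∀ i, t i ≠ 0 := fun i h => by
    have : (X i : MvPolynomial (Fin (n + 1)) ℚ) = 0 := by
      apply halg; rw [map_zero]; exact h
    exact MvPolynomial.X_ne_zero i this
  -- the inner products
  set P : Fin (n + 1) → K := fun j => ∏ l ∈ Finset.univ.erase j, (1 - t l / t j) with hP
  have hPne : ∀ j, P j ≠ 0 := by
    intro j
    rw [hP]
    refine Finset.prod_ne_zero_iff.mpr fun l hl => ?_
    rw [sub_ne_zero]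
    intro h
    have : t l = t j := by
      have := ht0 j
      rw [eq_div_iff this, one_mul] at h
      exact h.symm
    exact (Finset.mem_erase.mp hl).1 (htinj this)
  simp only [Finset.prod_pow]
  show (∏ j, P j ^ a j) = ∑ i, ∏ j, P j ^ (Function.update a i (a i - 1) j)
  have hterm : ∀ i : Fin (n + 1),
      (∏ j, P j ^ (Function.update a i (a i - 1) j)) = (∏ j, P j ^ a j) * (P i)⁻¹ := by
    intro i
    rw [← Finset.mul_prod_erase _ _ (mem_univ i), ← Finset.mul_prod_erase _ (fun j => P j ^ a j)
      (mem_univ i)]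
    have h1 : ∏ j ∈ Finset.univ.erase i, P j ^ (Function.update a i (a i - 1) j)
        = ∏ j ∈ Finset.univ.erase i, P j ^ a j := by
      refine Finset.prod_congr rfl fun j hj => ?_
      rw [Function.update_of_ne (Finset.mem_erase.mp hj).1]
    rw [h1, Function.update_self]
    have h2 : P i ^ (a i - 1) = P i ^ a i * (P i)⁻¹ := by
      rw [pow_sub₀ _ (hPne i) (ha i), pow_one]
    rw [h2]; ring
  calc (∏ j, P j ^ a j) = (∏ j, P j ^ a j) * ∑ i, (P i)⁻¹ := by
        rw [sum_inv_prod_one_sub_div t htinj ht0, mul_one]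
    _ = ∑ i, (∏ j, P j ^ a j) * (P i)⁻¹ := by rw [Finset.mul_sum]
    _ = ∑ i, ∏ j, P j ^ (Function.update a i (a i - 1) j) := by
        exact (Finset.sum_congr rfl fun i _ => (hterm i)).symm
end

section
/- Let $a_0,\ldots,a_n$ be nonnegative integers with $d = a_1+\cdots+a_n$, and let $L(x_1,\ldots,x_n)$ be a Laurent polynomial. The coefficient of $a_0^d$ in the polynomial (in $a_0$) given by $Q(a_0) = \mathrm{CT}_x\, L(x_1,\ldots,x_n)\prod_{l=1}^n(1-x_l/x_0)^{a_0}(1-x_0/x_l)^{a_l}$ equals $\frac{1}{d!}\mathrm{CT}_x\,(x_1+\cdots+x_n)^{d}\prod_{l=1}^n x_l^{-a_l}\,L(x_1,\ldots,x_n)$. -/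
open MvPolynomial Finset

lemma equivFunOnFinite_symm_cons {n : ℕ} (i : ℕ) (s : Fin n → ℕ) :
    (Finsupp.equivFunOnFinite.symm (Fin.cons i s) : Fin (n+1) →₀ ℕ) =
      Finsupp.cons i (Finsupp.equivFunOnFinite.symm s) := by
  ext j
  refine Fin.cases ?_ ?_ j <;> simp [Finsupp.cons_zero, Finsupp.cons_succ]

lemma finSuccEquiv_rename_succ {n : ℕ} (P : MvPolynomial (Fin n) ℚ) :
    finSuccEquiv ℚ n (rename Fin.succ P) = Polynomial.C P := by
  induction P using MvPolynomial.induction_on with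
  | C r => simp [finSuccEquiv_apply, algebraMap_eq]
  | add p q hp hq => simp [hp, hq]
  | mul_X p i hp => simp [hp, finSuccEquiv_X_succ]

/-- **Leading coefficient of the polynomial `Q`** (Corollary 6.1, first part).  With
`d = a_1 + ⋯ + a_n` and `L(x_1,…,x_n)` a Laurent polynomial (written as
`P / ∏_l x_l^(c_l)`), the quantity
`Q(a₀) = CT_x L(x_1,…,x_n) ∏_{l=1}^n (1-x_l/x_0)^(a₀)(1-x_0/x_l)^(a_l)`
agrees with a polynomial in `a₀` whose coefficient of `a₀^d` equals
`(1/d!) CT_x (x_1+⋯+x_n)^d ∏_l x_l^(-a_l) L(x_1,…,x_n)`.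
Clearing denominators, `Q(a₀)` is the coefficient of `x_0^(n·a₀) ∏_l x_l^(a_l+c_l)` in
`P · ∏_l (x_0-x_l)^(a₀)(x_l-x_0)^(a_l)`, and the right-hand constant term is the
coefficient of `∏_l x_l^(a_l+c_l)` in `(x_1+⋯+x_n)^d · P`. -/
theorem Q_leading_coefficient (n : ℕ) (a : Fin n → ℕ) (d : ℕ) (hd : d = ∑ l, a l)
    (P : MvPolynomial (Fin n) ℚ) (c : Fin n → ℕ) :
    ∃ p : Polynomial ℚ,
      (∀ a₀ : ℕ,
        MvPolynomial.coeff
          (Finsupp.equivFunOnFinite.symm (Fin.cons (n * a₀) (fun l => a l + c l)))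
          ((MvPolynomial.rename Fin.succ P) *
            ∏ l : Fin n,
              (X (0 : Fin (n + 1)) - X l.succ : MvPolynomial (Fin (n + 1)) ℚ) ^ a₀ *
                (X l.succ - X (0 : Fin (n + 1))) ^ (a l)) = p.eval (a₀ : ℚ)) ∧
      p.coeff d =
        (1 / (d.factorial : ℚ)) *
          MvPolynomial.coeff (Finsupp.equivFunOnFinite.symm fun l => a l + c l)
            ((∑ l : Fin n, X l) ^ d * P) := by
  classical
  set κ : Fin n →₀ ℕ := Finsupp.equivFunOnFinite.symm fun l => a l + c l with hκ
  set f : Polynomial (MvPolynomial (Fin n) ℚ) :=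
    ∏ l : Fin n, (Polynomial.X - Polynomial.C (X l)) with hf
  set g : Polynomial (MvPolynomial (Fin n) ℚ) :=
    ∏ l : Fin n, (Polynomial.C (X l) - Polynomial.X) ^ (a l) with hg
  set e : Polynomial (MvPolynomial (Fin n) ℚ) := f - Polynomial.X ^ n with he
  set h : Polynomial (MvPolynomial (Fin n) ℚ) := Polynomial.C P * g with hh
  set w : ℕ → ℚ := fun m =>
    MvPolynomial.coeff κ ((Polynomial.X ^ d * h * e ^ m).coeff (n * m + d)) with hw
  have hfmonic : f.Monic := Polynomial.monic_prod_of_monic _ _ fun l _ => Polynomial.monic_X_sub_C _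
  have hfdeg : f.natDegree = n := by
    rw [hf, Polynomial.natDegree_prod_of_monic _ _ fun l _ => Polynomial.monic_X_sub_C _]
    simp
  have hedeg : e.natDegree ≤ n - 1 := by
    rw [Polynomial.natDegree_le_iff_coeff_eq_zero]
    intro N hN
    have hN' : n ≤ N := by omega
    rw [he, Polynomial.coeff_sub, Polynomial.coeff_X_pow]
    rcases eq_or_lt_of_le hN' with hEq | hlt
    · have h1 : f.coeff N = 1 := by
        have := hfmonic.coeff_natDegree
        rw [hfdeg] at this
        rw [← hEq, this]
      rw [h1, if_pos hEq.symm, sub_self]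
    · rw [Polynomial.coeff_eq_zero_of_natDegree_lt (by rw [hfdeg]; exact hlt),
        if_neg (by omega), sub_self]
  have hepow : ∀ m : ℕ, (e ^ m).natDegree ≤ m * (n - 1) :=
    fun m => Polynomial.natDegree_pow_le.trans (Nat.mul_le_mul_left m hedeg)
  set M : Polynomial (MvPolynomial (Fin n) ℚ) :=
    ∏ l : Fin n, (Polynomial.X - Polynomial.C (X l)) ^ (a l) with hM
  have hMmonic : M.Monic :=
    Polynomial.monic_prod_of_monic _ _ fun l _ => (Polynomial.monic_X_sub_C _).pow _
  have hMdeg : M.natDegree = d := by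
    rw [hM, Polynomial.natDegree_prod_of_monic _ _ fun l _ => (Polynomial.monic_X_sub_C _).pow _, hd]
    simp [Polynomial.natDegree_pow]
  have hgM : g = (-1 : Polynomial (MvPolynomial (Fin n) ℚ)) ^ d * M := by
    rw [hg, hM, hd, ← Finset.prod_pow_eq_pow_sum, ← Finset.prod_mul_distrib]
    refine Finset.prod_congr rfl fun l _ => ?_
    rw [← mul_pow]
    ring_nf
  have hgdeg : g.natDegree ≤ d := by
    rw [hgM]
    refine Polynomial.natDegree_mul_le.trans ?_
    simp [hMdeg, Polynomial.natDegree_pow]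
  have hgcoeff : g.coeff d = (-1 : MvPolynomial (Fin n) ℚ) ^ d := by
    have : g.coeff (0 + d) = ((-1 : Polynomial (MvPolynomial (Fin n) ℚ)) ^ d).coeff 0 * M.coeff d := by
      rw [hgM]
      exact Polynomial.coeff_mul_add_eq_of_natDegree_le (by simp) hMdeg.le
    have hM1 : M.coeff d = 1 := hMdeg ▸ hMmonic.coeff_natDegree
    have hC : ((-1 : Polynomial (MvPolynomial (Fin n) ℚ)) ^ d).coeff 0
        = (-1 : MvPolynomial (Fin n) ℚ) ^ d := by
      rw [← Polynomial.C_1, ← Polynomial.C_neg, ← Polynomial.C_pow, Polynomial.coeff_C_zero]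
    rw [zero_add] at this
    rw [this, hC, hM1, mul_one]
  have hhdeg : h.natDegree ≤ d := by
    refine Polynomial.natDegree_mul_le.trans ?_
    simpa using hgdeg
  have hvanish : ∀ m : ℕ, d < m → (Polynomial.X ^ d * h * e ^ m).coeff (n * m + d) = 0 := by
    intro m hm
    rcases Nat.eq_zero_or_pos n with hn | hn
    · subst hn
      have hf1 : f = 1 := by rw [hf]; exact Finset.prod_of_isEmpty _
      have he0 : e = 0 := by rw [he, hf1, pow_zero, sub_self]
      rw [he0, zero_pow (by omega), mul_zero, Polynomial.coeff_zero]
    · apply Polynomial.coeff_eq_zero_of_natDegree_lt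
      have h1 : (Polynomial.X ^ d * h).natDegree ≤ d + d := by
        refine Polynomial.natDegree_mul_le.trans ?_
        simp only [Polynomial.natDegree_X_pow]
        exact Nat.add_le_add_left hhdeg d
      have h3 : (Polynomial.X ^ d * h * e ^ m).natDegree ≤ d + d + m * (n - 1) :=
        Polynomial.natDegree_mul_le.trans (Nat.add_le_add h1 (hepow m))
      refine lt_of_le_of_lt h3 ?_
      obtain ⟨k, rfl⟩ : ∃ k, n = k + 1 := ⟨n - 1, by omega⟩
      have hmul : (k + 1) * m = m * k + m := by ring
      simp only [Nat.add_sub_cancel]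
      omega
  have key : ∀ a₀ : ℕ,
      (Polynomial.C P * (f ^ a₀ * g)).coeff (n * a₀) =
        ∑ m ∈ range (d + 1),
          a₀.choose m • (Polynomial.X ^ d * h * e ^ m).coeff (n * m + d) := by
    intro a₀
    have e1 : Polynomial.C P * (f ^ a₀ * g) = h * f ^ a₀ := by rw [hh]; ring
    rw [e1, ← Polynomial.coeff_X_pow_mul (h * f ^ a₀) d (n * a₀)]
    have e2 : f = e + Polynomial.X ^ n := by rw [he]; ring
    rw [e2, add_pow, Finset.mul_sum, Finset.mul_sum, Polynomial.finset_sum_coeff]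
    have step : ∀ m ∈ range (a₀ + 1),
        (Polynomial.X ^ d * (h * (e ^ m * (Polynomial.X ^ n) ^ (a₀ - m) *
          (a₀.choose m : Polynomial (MvPolynomial (Fin n) ℚ))))).coeff (n * a₀ + d)
        = a₀.choose m • (Polynomial.X ^ d * h * e ^ m).coeff (n * m + d) := by
      intro m hm
      have hmle : m ≤ a₀ := Nat.lt_succ_iff.mp (Finset.mem_range.mp hm)
      have e3 : Polynomial.X ^ d * (h * (e ^ m * (Polynomial.X ^ n) ^ (a₀ - m) *
            (a₀.choose m : Polynomial (MvPolynomial (Fin n) ℚ))))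
          = a₀.choose m • (Polynomial.X ^ (n * (a₀ - m)) * (Polynomial.X ^ d * h * e ^ m)) := by
        rw [← pow_mul, nsmul_eq_mul]; ring
      rw [e3, Polynomial.coeff_smul]
      have e4 : n * a₀ + d = n * m + d + n * (a₀ - m) := by
        have : n * (a₀ - m) + n * m = n * a₀ := by
          rw [← Nat.mul_add]; congr 1; omega
        omega
      rw [e4, Polynomial.coeff_X_pow_mul]
    rw [Finset.sum_congr rfl step]
    set T : ℕ → MvPolynomial (Fin n) ℚ :=
      fun m => a₀.choose m • (Polynomial.X ^ d * h * e ^ m).coeff (n * m + d) with hT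
    have h5 : ∑ m ∈ range (a₀ + 1), T m = ∑ m ∈ range (max a₀ d + 1), T m := by
      refine Finset.sum_subset (Finset.range_subset_range.mpr (by omega)) ?_
      intro m hmt hms
      simp only [Finset.mem_range] at hmt hms
      simp [hT, Nat.choose_eq_zero_of_lt (show a₀ < m by omega)]
    have h6 : ∑ m ∈ range (d + 1), T m = ∑ m ∈ range (max a₀ d + 1), T m := by
      refine Finset.sum_subset (Finset.range_subset_range.mpr (by omega)) ?_
      intro m hmt hms
      simp only [Finset.mem_range] at hmt hms
      simp [hT, hvanish m (by omega)]
    rw [h5, h6]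
  have hwd : w d = MvPolynomial.coeff κ ((∑ l : Fin n, X l) ^ d * P) := by
    simp only [hw]
    have e5 : Polynomial.X ^ d * h * e ^ d = Polynomial.X ^ d * (h * e ^ d) := by ring
    rw [e5]
    have e6 : (Polynomial.X ^ d * (h * e ^ d)).coeff (n * d + d) = (h * e ^ d).coeff (n * d) :=
      Polynomial.coeff_X_pow_mul (h * e ^ d) d (n * d)
    rw [e6]
    rcases Nat.eq_zero_or_pos d with hd0 | hdpos
    · subst hd0
      have ha0 : ∀ l ∈ (univ : Finset (Fin n)), a l = 0 := Finset.sum_eq_zero_iff.mp hd.symm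
      have hg1 : g = 1 := by
        rw [hg]
        refine Finset.prod_eq_one fun l hl => ?_
        rw [ha0 l hl, pow_zero]
      simp [hh, hg1]
    · have hn : 0 < n := by
        rcases Nat.eq_zero_or_pos n with hn0 | hn0
        · subst hn0; rw [hd] at hdpos; simp at hdpos
        · exact hn0
      have e7 : n * d = d + (n - 1) * d := by
        obtain ⟨k, rfl⟩ : ∃ k, n = k + 1 := ⟨n - 1, by omega⟩
        simp only [Nat.add_sub_cancel]
        ring
      rw [e7, Polynomial.coeff_mul_add_eq_of_natDegree_le hhdeg
        (Polynomial.natDegree_pow_le.trans (by rw [mul_comm]; exact Nat.mul_le_mul_right d hedeg))]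
      have e8 : (e ^ d).coeff ((n - 1) * d) = e.coeff (n - 1) ^ d := by
        rw [mul_comm]; exact Polynomial.coeff_pow_of_natDegree_le hedeg
      have e9 : h.coeff d = P * (-1 : MvPolynomial (Fin n) ℚ) ^ d := by
        rw [hh, Polynomial.coeff_C_mul, hgcoeff]
      have e10 : e.coeff (n - 1) = -(∑ l : Fin n, X l) := by
        rw [he, Polynomial.coeff_sub, Polynomial.coeff_X_pow, if_neg (by omega)]
        have hnext : f.coeff (n - 1) = f.nextCoeff := by
          rw [Polynomial.nextCoeff, if_neg (by rw [hfdeg]; omega), hfdeg]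
        rw [hnext, hf, Polynomial.prod_X_sub_C_nextCoeff]
        simp
      rw [e8, e9, e10]
      congr 1
      have hsign : ((-1 : MvPolynomial (Fin n) ℚ)) ^ d * (-1) ^ d = 1 := by
        rw [← mul_pow]; norm_num
      calc P * (-1 : MvPolynomial (Fin n) ℚ) ^ d * (-(∑ l : Fin n, X l)) ^ d
          = ((-1) ^ d * (-1) ^ d) * ((∑ l : Fin n, X l) ^ d * P) := by rw [neg_pow]; ring
        _ = (∑ l : Fin n, X l) ^ d * P := by rw [hsign, one_mul]
  refine ⟨∑ m ∈ range (d + 1), Polynomial.C (w m / m.factorial) * descPochhammer ℚ m, ?_, ?_⟩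
  · intro a₀
    have hmap : finSuccEquiv ℚ n ((rename Fin.succ) P *
        ∏ l : Fin n, (X (0 : Fin (n + 1)) - X l.succ) ^ a₀ * (X l.succ - X (0 : Fin (n + 1))) ^ (a l))
        = Polynomial.C P * (f ^ a₀ * g) := by
      rw [map_mul, map_prod, finSuccEquiv_rename_succ]
      congr 1
      rw [hf, hg, ← Finset.prod_pow, ← Finset.prod_mul_distrib]
      refine Finset.prod_congr rfl fun l _ => ?_
      rw [map_mul, map_pow, map_pow, map_sub, map_sub, finSuccEquiv_X_zero, finSuccEquiv_X_succ]
    have h1 : MvPolynomial.coeff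
          (Finsupp.equivFunOnFinite.symm (Fin.cons (n * a₀) (fun l => a l + c l)))
          ((MvPolynomial.rename Fin.succ P) *
            ∏ l : Fin n,
              (X (0 : Fin (n + 1)) - X l.succ : MvPolynomial (Fin (n + 1)) ℚ) ^ a₀ *
                (X l.succ - X (0 : Fin (n + 1))) ^ (a l)) =
        MvPolynomial.coeff κ ((Polynomial.C P * (f ^ a₀ * g)).coeff (n * a₀)) := by
      rw [equivFunOnFinite_symm_cons, ← hmap, finSuccEquiv_coeff_coeff]
    rw [h1, key a₀, MvPolynomial.coeff_sum, Polynomial.eval_finset_sum]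
    refine Finset.sum_congr rfl fun m hm => ?_
    rw [MvPolynomial.coeff_smul, Polynomial.eval_mul, Polynomial.eval_C,
      descPochhammer_eval_eq_descFactorial, Nat.descFactorial_eq_factorial_mul_choose]
    have hfac : (m.factorial : ℚ) ≠ 0 := Nat.cast_ne_zero.mpr m.factorial_ne_zero
    rw [nsmul_eq_mul]
    simp only [hw]
    push_cast
    field_simp
  · rw [Polynomial.finset_sum_coeff,
      Finset.sum_eq_single d
        (fun m hm hne => by
          have hmlt : m < d := by
            have := Finset.mem_range.mp hm; omega
          rw [Polynomial.coeff_C_mul, Polynomial.coeff_eq_zero_of_natDegree_lt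
            (by rw [descPochhammer_natDegree]; exact hmlt), mul_zero])
        (fun hd' => absurd (Finset.self_mem_range_succ d) hd')]
    have hmono : (descPochhammer ℚ d).coeff d = 1 := by
      have h1 := (monic_descPochhammer ℚ d).coeff_natDegree
      rwa [descPochhammer_natDegree] at h1
    rw [Polynomial.coeff_C_mul, hmono, mul_one, hwd, div_eq_mul_inv, one_div]
    ring
end

section
/- Let $b,k,n,m$ be nonnegative integers with $k\ge b$, $1\le m\le n-1$, and let $h$ be a positive integer with $h \le nk+1$. If the coefficient of $\prod_{l=1}^n x_l^{(n-1)k+b}$ in $\frac{\prod_{1\le i<j\le n}(x_i-x_j)^{2k}}{\prod_{l=1}^n (1-x_l)^{h-b-\chi(l\le m)}}$ is nonzero, then there exists $t$ with $0\le t\le n$ such that either ($t < n-m$ and $(t-1)k+b+1 \le h \le tk$), or ($t = n-m$ and $(t-1)k+b+1 \le h \le tk+1$), or ($t > n-m$ and $(t-1)k+b+2 \le h \le tk+1$). -/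
open Finset

namespace AomotoAux

/-! ### One-variable binomial series coefficients -/

/-- `w e i` is the coefficient of `X^i` in the binomial series expansion of `(1-X)^e`
for an integer exponent `e`. -/
noncomputable def w (e : ℤ) (i : ℕ) : ℚ :=
  if 0 ≤ e then (-1 : ℚ)^i * (e.toNat.choose i) else ((i + (-e).toNat - 1).choose i)

lemma w_zero' (i : ℕ) : w 0 i = if i = 0 then 1 else 0 := by
  cases i <;> simp [w]

lemma w_apply_zero (e : ℤ) : w e 0 = 1 := by
  unfold w; split <;> simp

lemma w_pascal (e : ℤ) (i : ℕ) : w e (i+1) = w (e+1) (i+1) + w e i := by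
  rcases le_or_gt 0 e with he | he
  · have hh1 : (0:ℤ) ≤ e + 1 := by omega
    have hh2 : (e+1).toNat = e.toNat + 1 := by omega
    simp only [w, if_pos he, if_pos hh1, hh2, Nat.choose_succ_succ]
    push_cast
    ring
  · rcases eq_or_lt_of_le (show e ≤ -1 by omega) with rfl | he2
    · have hz : ((-1:ℤ)+1) = 0 := by ring
      rw [hz, w_zero']
      simp only [w, if_neg (by omega : ¬ (0:ℤ) ≤ -1)]
      simp [Nat.add_sub_cancel]
    · have hh1 : ¬ (0:ℤ) ≤ e := by omega
      have hh2 : ¬ (0:ℤ) ≤ e + 1 := by omega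
      have hh3 : (-(e+1)).toNat = (-e).toNat - 1 := by omega
      have hh4 : 2 ≤ (-e).toNat := by omega
      simp only [w, if_neg hh1, if_neg hh2, hh3]
      set T := (-e).toNat with hT
      set N := i + T - 1 with hN
      have key : i + 1 + T - 1 = N + 1 := by omega
      have key2 : i + 1 + (T - 1) - 1 = N := by omega
      rw [key, key2, Nat.choose_succ_succ]
      push_cast
      ring

lemma w_ne_zero {e : ℤ} {i : ℕ} (hw : w e i ≠ 0) : e < 0 ∨ (i : ℤ) ≤ e := by
  by_contra hc
  push_neg at hc
  obtain ⟨hc1, hc2⟩ := hc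
  apply hw
  rw [w, if_pos hc1, Nat.choose_eq_zero_of_lt (by omega : e.toNat < i)]
  simp
open MvPowerSeries in
/-- The power series `(1-X_l)^e` (binomial series) in `MvPowerSeries (Fin n) ℚ`. -/
noncomputable def A {n : ℕ} (l : Fin n) (e : ℤ) : MvPowerSeries (Fin n) ℚ :=
  fun d => if ∀ j, j ≠ l → d j = 0 then w e (d l) else 0

lemma coeff_A {n : ℕ} (l : Fin n) (e : ℤ) (d : Fin n →₀ ℕ) :
    MvPowerSeries.coeff d (A l e) =
      if ∀ j, j ≠ l → d j = 0 then w e (d l) else 0 := rfl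

lemma A_mul_one_sub_X {n : ℕ} (l : Fin n) (e : ℤ) :
    A l e * (1 - MvPowerSeries.X l) = A l (e + 1) := by
  apply MvPowerSeries.ext
  intro d
  rw [mul_sub, mul_one, map_sub, MvPowerSeries.X, MvPowerSeries.coeff_mul_monomial]
  simp only [coeff_A, mul_one]
  by_cases hd : ∀ j, j ≠ l → d j = 0
  · by_cases hdl : d l = 0
    · rw [if_pos hd, if_pos hd, if_neg, hdl, w_apply_zero, w_apply_zero, sub_zero]
      rw [Finsupp.single_le_iff]
      omega
    · obtain ⟨i, hi⟩ : ∃ i, d l = i + 1 := ⟨d l - 1, by omega⟩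
      have hle : Finsupp.single l 1 ≤ d := Finsupp.single_le_iff.mpr (by omega)
      have hd' : ∀ j, j ≠ l → (d - Finsupp.single l 1 : Fin n →₀ ℕ) j = 0 := by
        intro j hj
        simp [Finsupp.tsub_apply, Finsupp.single_eq_of_ne (Ne.symm hj), hd j hj]
      have hdl' : (d - Finsupp.single l 1 : Fin n →₀ ℕ) l = i := by
        rw [Finsupp.tsub_apply, Finsupp.single_eq_same, hi]
        omega
      rw [if_pos hd, if_pos hd, if_pos hle, if_pos hd', hdl', hi, w_pascal e i]
      ring
  · have h0 : ∀ (u : Fin n →₀ ℕ), (¬ ∀ j, j ≠ l → u j = 0) →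
        (if ∀ j, j ≠ l → u j = 0 then w e (u l) else 0) = 0 := fun u hu => if_neg hu
    rw [if_neg hd]
    by_cases hle : Finsupp.single l 1 ≤ d
    · rw [if_pos hle, if_neg hd, if_neg, sub_zero]
      push_neg at hd ⊢
      obtain ⟨j, hj, hdj⟩ := hd
      refine ⟨j, hj, ?_⟩
      rw [Finsupp.tsub_apply, Finsupp.single_eq_of_ne hj]
      omega
    · rw [if_neg hle, if_neg hd, sub_zero]

lemma A_zero {n : ℕ} (l : Fin n) : A l 0 = 1 := by
  apply MvPowerSeries.ext
  intro d
  classical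
  rw [coeff_A, MvPowerSeries.coeff_one]
  by_cases hd : ∀ j, j ≠ l → d j = 0
  · rw [if_pos hd, w_zero']
    by_cases hdl : d l = 0
    · rw [if_pos hdl, if_pos]
      ext j
      by_cases hj : j = l
      · subst hj; simp [hdl]
      · simp [hd j hj]
    · rw [if_neg hdl, if_neg]
      intro h
      subst h
      simp at hdl
  · rw [if_neg hd, if_neg]
    intro h
    subst h
    exact hd fun j _ => rfl

lemma A_nat {n : ℕ} (l : Fin n) (p : ℕ) :
    (1 - MvPowerSeries.X l : MvPowerSeries (Fin n) ℚ) ^ p = A l p := by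
  induction p with
  | zero => rw [pow_zero, Int.ofNat_zero, A_zero]
  | succ p ih =>
      rw [pow_succ, ih, A_mul_one_sub_X]
      norm_num

lemma A_neg_mul_pow {n : ℕ} (l : Fin n) (p : ℕ) :
    A l (-(p:ℤ)) * (1 - MvPowerSeries.X l : MvPowerSeries (Fin n) ℚ) ^ p = 1 := by
  induction p with
  | zero => rw [pow_zero, mul_one, Int.ofNat_zero, neg_zero, A_zero]
  | succ p ih =>
      rw [pow_succ, ← mul_assoc, mul_right_comm, A_mul_one_sub_X]
      have : (-((p:ℤ)+1) + 1) = -(p:ℤ) := by ring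
      push_cast
      rw [this, ih]

lemma A_cast_add {n : ℕ} (l : Fin n) (g : ℕ) (e : ℤ) :
    A l ((g : ℤ) + e) = A l g * A l e := by
  induction g generalizing e with
  | zero => rw [Int.ofNat_zero, A_zero, zero_add, one_mul]
  | succ g ih =>
      have h1 : ((g+1 : ℕ) : ℤ) + e = (g : ℤ) + (e + 1) := by push_cast; ring
      have h2 : ((g+1:ℕ):ℤ) = (g:ℤ) + 1 := by push_cast; ring
      rw [h1, ih, h2, ← A_mul_one_sub_X l e, ← A_mul_one_sub_X l (g:ℤ)]
      ring

lemma constCoeff_one_sub_X {n : ℕ} (l : Fin n) :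
    MvPowerSeries.constantCoeff (1 - MvPowerSeries.X l : MvPowerSeries (Fin n) ℚ) ≠ 0 := by
  rw [map_sub, MvPowerSeries.constantCoeff_one, MvPowerSeries.constantCoeff_X]
  norm_num

lemma inv_pow_eq_A {n : ℕ} (l : Fin n) (p : ℕ) :
    ((1 - MvPowerSeries.X l : MvPowerSeries (Fin n) ℚ)⁻¹) ^ p = A l (-(p:ℤ)) := by
  have h1 : ((1 - MvPowerSeries.X l : MvPowerSeries (Fin n) ℚ)⁻¹) ^ p *
      (1 - MvPowerSeries.X l) ^ p = 1 := by
    rw [← mul_pow, MvPowerSeries.inv_mul_cancel _ (constCoeff_one_sub_X l), one_pow]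
  have h2 := A_neg_mul_pow l p
  calc ((1 - MvPowerSeries.X l : MvPowerSeries (Fin n) ℚ)⁻¹) ^ p
      = ((1 - MvPowerSeries.X l : MvPowerSeries (Fin n) ℚ)⁻¹) ^ p *
          (A l (-(p:ℤ)) * (1 - MvPowerSeries.X l) ^ p) := by rw [h2, mul_one]
    _ = A l (-(p:ℤ)) * (((1 - MvPowerSeries.X l : MvPowerSeries (Fin n) ℚ)⁻¹) ^ p *
          (1 - MvPowerSeries.X l) ^ p) := by ring
    _ = A l (-(p:ℤ)) := by rw [h1, mul_one]

/-- the factor appearing in the hypothesis equals `A l (-a)`. -/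
lemma factor_eq_A {n : ℕ} (l : Fin n) (a : ℤ) :
    ((1 - MvPowerSeries.X l : MvPowerSeries (Fin n) ℚ)⁻¹) ^ (a.toNat) *
      (1 - MvPowerSeries.X l : MvPowerSeries (Fin n) ℚ) ^ ((-a).toNat) = A l (-a) := by
  rcases le_or_gt 0 a with ha | ha
  · have h1 : (-a).toNat = 0 := by omega
    have h2 : ((a.toNat : ℕ) : ℤ) = a := by omega
    rw [h1, pow_zero, mul_one, inv_pow_eq_A, h2]
  · have h1 : a.toNat = 0 := by omega
    have h2 : (((-a).toNat : ℕ) : ℤ) = -a := by omega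
    rw [h1, pow_zero, one_mul, A_nat, h2]

lemma coeff_prod_A {n : ℕ} (e : Fin n → ℤ) (E : Fin n →₀ ℕ) :
    MvPowerSeries.coeff E (∏ l, A l (e l)) = ∏ l, w (e l) (E l) := by
  classical
  rw [MvPowerSeries.coeff_prod]
  set u₀ : Fin n →₀ (Fin n →₀ ℕ) :=
    Finsupp.equivFunOnFinite.symm (fun l => Finsupp.single l (E l)) with hu₀
  have hu₀app : ∀ l, u₀ l = Finsupp.single l (E l) := fun l => rfl
  have hsum : Finset.univ.sum ⇑u₀ = E := by
    ext j
    rw [Finsupp.finset_sum_apply]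
    simp only [hu₀app, Finsupp.single_apply]
    simp
  have hmem : u₀ ∈ Finset.finsuppAntidiag Finset.univ E := by
    rw [Finset.mem_finsuppAntidiag]
    exact ⟨hsum, Finset.subset_univ _⟩
  rw [Finset.sum_eq_single u₀]
  · apply Finset.prod_congr rfl
    intro l _
    rw [hu₀app, coeff_A, if_pos, Finsupp.single_eq_same]
    intro j hj
    rw [Finsupp.single_eq_of_ne hj]
  · intro u hu hne
    by_contra hprod
    apply hne
    have hsupp : ∀ l : Fin n, ∀ j, j ≠ l → (u l) j = 0 := by
      intro l
      have : MvPowerSeries.coeff (u l) (A l (e l)) ≠ 0 := by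
        intro h0
        apply hprod
        exact Finset.prod_eq_zero (Finset.mem_univ l) h0
      rw [coeff_A] at this
      by_contra hc
      push_neg at hc
      rw [if_neg] at this
      · exact this rfl
      · push_neg
        exact hc
    have husum : Finset.univ.sum ⇑u = E := ((Finset.mem_finsuppAntidiag).mp hu).1
    ext l j
    rw [hu₀app]
    by_cases hj : j = l
    · subst hj
      rw [Finsupp.single_eq_same]
      have : E j = ∑ l', (u l') j := by rw [← Finsupp.finset_sum_apply, husum]
      rw [this, Finset.sum_eq_single j]
      · intro l' _ hl'
        exact hsupp l' j (Ne.symm hl')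
      · intro h; exact absurd (Finset.mem_univ j) h
    · rw [Finsupp.single_eq_of_ne hj, hsupp l j hj]
  · intro h; exact absurd hmem h

/-- sum of exponents of `γ` over the index set `S`. -/
def wt (S : Finset (Fin n)) (γ : Fin n →₀ ℕ) : ℕ := ∑ l ∈ S, γ l

lemma wt_add (S : Finset (Fin n)) (γ₁ γ₂ : Fin n →₀ ℕ) :
    wt S (γ₁ + γ₂) = wt S γ₁ + wt S γ₂ := by
  simp [wt, Finset.sum_add_distrib]

/-- all monomials of `p` have `S`-weight at least `c`. -/
def MinWt (S : Finset (Fin n)) (c : ℕ) (p : MvPolynomial (Fin n) ℚ) : Prop :=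
  ∀ γ ∈ p.support, c ≤ wt S γ

/-- all monomials of `p` have `S`-weight at most `c`. -/
def MaxWt (S : Finset (Fin n)) (c : ℕ) (p : MvPolynomial (Fin n) ℚ) : Prop :=
  ∀ γ ∈ p.support, wt S γ ≤ c

lemma MinWt.mul {S c d p q} (hp : MinWt S c p) (hq : MinWt S d q) :
    MinWt (n := n) S (c + d) (p * q) := by
  intro γ hγ
  classical
  obtain ⟨γ₁, hγ₁, γ₂, hγ₂, rfl⟩ := Finset.mem_add.mp (MvPolynomial.support_mul p q hγ)
  rw [wt_add]
  exact Nat.add_le_add (hp γ₁ hγ₁) (hq γ₂ hγ₂)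

lemma MaxWt.mul {S c d p q} (hp : MaxWt S c p) (hq : MaxWt S d q) :
    MaxWt (n := n) S (c + d) (p * q) := by
  intro γ hγ
  classical
  obtain ⟨γ₁, hγ₁, γ₂, hγ₂, rfl⟩ := Finset.mem_add.mp (MvPolynomial.support_mul p q hγ)
  rw [wt_add]
  exact Nat.add_le_add (hp γ₁ hγ₁) (hq γ₂ hγ₂)

lemma MinWt.one (S : Finset (Fin n)) : MinWt S 0 (1 : MvPolynomial (Fin n) ℚ) :=
  fun _ _ => Nat.zero_le _

lemma wt_single (S : Finset (Fin n)) (i : Fin n) :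
    wt S (Finsupp.single i 1) = if i ∈ S then 1 else 0 := by
  simp [wt, Finsupp.single_apply, Finset.sum_ite_eq]

lemma MaxWt.one (S : Finset (Fin n)) : MaxWt S 0 (1 : MvPolynomial (Fin n) ℚ) := by
  intro γ hγ
  rw [MvPolynomial.mem_support_iff] at hγ
  simp only [MvPolynomial.coeff_one] at hγ
  split_ifs at hγ with hh
  · subst hh; simp [wt]
  · simp at hγ

lemma MinWt.pow {S c p} (hp : MinWt S c p) (r : ℕ) : MinWt (n := n) S (r * c) (p ^ r) := by
  induction r with
  | zero => simpa using MinWt.one S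
  | succ r ih =>
      rw [pow_succ, show (r+1)*c = r*c + c from by ring]
      exact ih.mul hp

lemma MaxWt.pow {S c p} (hp : MaxWt S c p) (r : ℕ) : MaxWt (n := n) S (r * c) (p ^ r) := by
  induction r with
  | zero => simpa using MaxWt.one S
  | succ r ih =>
      rw [pow_succ, show (r+1)*c = r*c + c from by ring]
      exact ih.mul hp

lemma MinWt.prod {S : Finset (Fin n)} {ι : Type*} (s : Finset ι) (c : ι → ℕ)
    (f : ι → MvPolynomial (Fin n) ℚ) (hf : ∀ i ∈ s, MinWt S (c i) (f i)) :
    MinWt S (∑ i ∈ s, c i) (∏ i ∈ s, f i) := by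
  classical
  induction s using Finset.induction_on with
  | empty => simpa using MinWt.one S
  | insert _ _ hx ih =>
      rename_i x s'
      rw [Finset.sum_insert hx, Finset.prod_insert hx]
      exact (hf x (Finset.mem_insert_self x s')).mul
        (ih fun i hi => hf i (Finset.mem_insert_of_mem hi))

lemma MaxWt.prod {S : Finset (Fin n)} {ι : Type*} (s : Finset ι) (c : ι → ℕ)
    (f : ι → MvPolynomial (Fin n) ℚ) (hf : ∀ i ∈ s, MaxWt S (c i) (f i)) :
    MaxWt S (∑ i ∈ s, c i) (∏ i ∈ s, f i) := by
  classical
  induction s using Finset.induction_on with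
  | empty => simpa using MaxWt.one S
  | insert _ _ hx ih =>
      rename_i x s'
      rw [Finset.sum_insert hx, Finset.prod_insert hx]
      exact (hf x (Finset.mem_insert_self x s')).mul
        (ih fun i hi => hf i (Finset.mem_insert_of_mem hi))

lemma minwt_X_sub_X {S : Finset (Fin n)} {i j : Fin n} :
    MinWt S (if i ∈ S ∧ j ∈ S then 1 else 0)
      ((MvPolynomial.X i - MvPolynomial.X j : MvPolynomial (Fin n) ℚ)) := by
  intro γ hγ
  classical
  have := MvPolynomial.support_sub (Fin n) (MvPolynomial.X i) (MvPolynomial.X j) hγ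
  rw [MvPolynomial.support_X, MvPolynomial.support_X] at this
  simp only [Finset.mem_union, Finset.mem_singleton] at this
  split_ifs with hij
  · rcases this with rfl | rfl
    · rw [wt_single, if_pos hij.1]
    · rw [wt_single, if_pos hij.2]
  · exact Nat.zero_le _

lemma maxwt_X_sub_X {S : Finset (Fin n)} {i j : Fin n} :
    MaxWt S 1 ((MvPolynomial.X i - MvPolynomial.X j : MvPolynomial (Fin n) ℚ)) := by
  intro γ hγ
  classical
  have := MvPolynomial.support_sub (Fin n) (MvPolynomial.X i) (MvPolynomial.X j) hγ
  rw [MvPolynomial.support_X, MvPolynomial.support_X] at this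
  simp only [Finset.mem_union, Finset.mem_singleton] at this
  rcases this with rfl | rfl <;>
    · rw [wt_single]
      split <;> omega

/-- double counting: `2 * #{(i,j) : i < j ∈ S} = |S| * (|S|-1)`. -/
lemma double_count (S : Finset (Fin n)) :
    2 * (∑ i ∈ S, (S.filter (fun j => i < j)).card) = S.card * (S.card - 1) := by
  classical
  have hpt : ∀ i j : Fin n, ((if i < j then 1 else 0) + (if j < i then 1 else 0))
      + (if i = j then 1 else 0) = 1 := by
    intro i j
    rcases lt_trichotomy i j with hc | hc | hc
    · simp [hc, not_lt_of_gt hc, Ne.symm (ne_of_lt hc), ne_of_lt hc]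
    · simp [hc, lt_irrefl]
    · simp [hc, not_lt_of_gt hc, ne_of_gt hc, lt_asymm hc]
  have key : ∑ i ∈ S, ∑ j ∈ S, (((if i < j then 1 else 0) + (if j < i then 1 else 0))
      + (if i = j then 1 else 0)) = S.card * S.card := by
    simp only [hpt]
    simp [Finset.sum_const, mul_comm]
  have h1 : ∀ i ∈ S, ∑ j ∈ S, (if i < j then 1 else 0) = (S.filter (fun j => i < j)).card := by
    intro i _
    rw [Finset.sum_boole]
    norm_num
  have h2 : ∑ i ∈ S, ∑ j ∈ S, (if j < i then 1 else 0)
      = ∑ i ∈ S, ∑ j ∈ S, (if i < j then 1 else 0) := by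
    rw [Finset.sum_comm]
  have h3 : ∑ i ∈ S, ∑ j ∈ S, (if i = j then 1 else 0) = S.card := by
    have : ∀ i ∈ S, ∑ j ∈ S, (if i = j then 1 else 0) = 1 := by
      intro i hi
      rw [Finset.sum_ite_eq S i (fun _ => 1)]
      simp [hi]
    rw [Finset.sum_congr rfl this]
    simp
  simp only [Finset.sum_add_distrib] at key
  rw [h2, h3] at key
  have h4 : ∑ i ∈ S, ∑ j ∈ S, (if i < j then 1 else 0)
      = ∑ i ∈ S, (S.filter (fun j => i < j)).card := Finset.sum_congr rfl h1
  rw [h4] at key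
  have hc : S.card * (S.card - 1) + S.card = S.card * S.card := by
    cases' S.card with c
    · simp
    · simp only [Nat.succ_sub_one]
      ring
  have := Nat.add_right_cancel (key.trans hc.symm)
  omega


end AomotoAux

open Finset AomotoAux

set_option maxHeartbeats 4000000 in
/-- **Vanishing lemma for Aomoto's identity** (Lemma 4.2, contrapositive form). -/
theorem aomoto_vanishing (n b k m h : ℕ) (hkb : b ≤ k) (hm1 : 1 ≤ m) (hm2 : m ≤ n - 1)
    (h1 : 1 ≤ h) (h2 : h ≤ n * k + 1)
    (hne : MvPowerSeries.coeff
      (Finsupp.equivFunOnFinite.symm (fun _ : Fin n => (n - 1) * k + b))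
      ((∏ i : Fin n, ∏ j ∈ Finset.univ.filter (fun j => i < j),
          (MvPowerSeries.X i - MvPowerSeries.X j : MvPowerSeries (Fin n) ℚ) ^ (2 * k)) *
        ∏ l : Fin n,
          ((1 - MvPowerSeries.X l : MvPowerSeries (Fin n) ℚ)⁻¹) ^
              (((h : ℤ) - b - (if (l : ℕ) < m then 1 else 0)).toNat) *
            (1 - MvPowerSeries.X l : MvPowerSeries (Fin n) ℚ) ^
              ((-((h : ℤ) - b - (if (l : ℕ) < m then 1 else 0))).toNat)) ≠ 0) :
    ∃ t : ℕ, t ≤ n ∧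
      ((t < n - m ∧ ((t : ℤ) - 1) * k + b + 1 ≤ (h : ℤ) ∧ (h : ℤ) ≤ (t : ℤ) * k) ∨
        (t = n - m ∧ ((t : ℤ) - 1) * k + b + 1 ≤ (h : ℤ) ∧ (h : ℤ) ≤ (t : ℤ) * k + 1) ∨
        (t > n - m ∧ ((t : ℤ) - 1) * k + b + 2 ≤ (h : ℤ) ∧ (h : ℤ) ≤ (t : ℤ) * k + 1)) := by
  classical
  have hn2 : 2 ≤ n := by omega
  set M : ℕ := (n-1)*k + b with hM
  set a : Fin n → ℤ := fun l => (h:ℤ) - b - (if (l:ℕ) < m then 1 else 0) with ha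
  set V : MvPolynomial (Fin n) ℚ := ∏ i : Fin n, ∏ j ∈ univ.filter (fun j => i < j),
    (MvPolynomial.X i - MvPolynomial.X j)^(2*k) with hV
  set E : Fin n →₀ ℕ := Finsupp.equivFunOnFinite.symm (fun _ : Fin n => M) with hEdef
  have hE : ∀ l, E l = M := fun l => rfl
  -- Step A: rewrite the coefficient as a finite sum
  have key0 : ((∏ i : Fin n, ∏ j ∈ Finset.univ.filter (fun j => i < j),
          (MvPowerSeries.X i - MvPowerSeries.X j : MvPowerSeries (Fin n) ℚ) ^ (2 * k)) *
        ∏ l : Fin n,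
          ((1 - MvPowerSeries.X l : MvPowerSeries (Fin n) ℚ)⁻¹) ^ ((a l).toNat) *
            (1 - MvPowerSeries.X l : MvPowerSeries (Fin n) ℚ) ^ ((-(a l)).toNat))
      = ∑ γ ∈ V.support, MvPowerSeries.C (V.coeff γ) *
          ∏ l, A l ((γ l : ℤ) - a l) := by
    have hfac : (∏ l : Fin n,
        ((1 - MvPowerSeries.X l : MvPowerSeries (Fin n) ℚ)⁻¹) ^ ((a l).toNat) *
          (1 - MvPowerSeries.X l : MvPowerSeries (Fin n) ℚ) ^ ((-(a l)).toNat))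
        = ∏ l, A l (-(a l)) :=
      Finset.prod_congr rfl (fun l _ => factor_eq_A l (a l))
    have hV1 : (∏ i : Fin n, ∏ j ∈ Finset.univ.filter (fun j => i < j),
          (MvPowerSeries.X i - MvPowerSeries.X j : MvPowerSeries (Fin n) ℚ) ^ (2 * k))
        = MvPolynomial.aeval
            (fun l => (1 - MvPowerSeries.X l : MvPowerSeries (Fin n) ℚ)) V := by
      rw [hV, map_prod]
      refine Finset.prod_congr rfl fun i _ => ?_
      rw [map_prod]
      refine Finset.prod_congr rfl fun j _ => ?_
      rw [map_pow, map_sub, MvPolynomial.aeval_X, MvPolynomial.aeval_X]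
      have hneg : (1 - MvPowerSeries.X i) - (1 - MvPowerSeries.X j)
          = -(MvPowerSeries.X i - MvPowerSeries.X j : MvPowerSeries (Fin n) ℚ) := by ring
      rw [hneg, Even.neg_pow (even_two_mul k)]
    rw [hV1, hfac]
    conv_lhs => rw [V.as_sum]
    rw [map_sum, Finset.sum_mul]
    refine Finset.sum_congr rfl fun γ _ => ?_
    rw [MvPolynomial.aeval_monomial,
      show (algebraMap ℚ (MvPowerSeries (Fin n) ℚ)) (V.coeff γ)
          = MvPowerSeries.C (V.coeff γ) from by
        rw [MvPowerSeries.algebraMap_apply]; simp,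
      Finsupp.prod_fintype _ _ (fun l => pow_zero _), mul_assoc]
    congr 1
    calc (∏ l, (1 - MvPowerSeries.X l : MvPowerSeries (Fin n) ℚ) ^ (γ l)) *
          ∏ l, A l (-(a l))
        = (∏ l, A l ((γ l : ℕ) : ℤ)) * ∏ l, A l (-(a l)) := by
          rw [Finset.prod_congr rfl fun l _ => A_nat l (γ l)]
      _ = ∏ l, (A l ((γ l : ℕ) : ℤ) * A l (-(a l))) := Finset.prod_mul_distrib.symm
      _ = ∏ l, A l ((γ l : ℤ) - a l) := by
          refine Finset.prod_congr rfl fun l _ => ?_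
          rw [← A_cast_add l (γ l) (-(a l)), sub_eq_add_neg]
  have key : (∑ γ ∈ V.support, V.coeff γ * ∏ l, w ((γ l : ℤ) - a l) M) ≠ 0 := by
    intro hzero
    apply hne
    show MvPowerSeries.coeff E _ = 0
    calc MvPowerSeries.coeff E _
        = ∑ γ ∈ V.support, V.coeff γ * ∏ l, w ((γ l : ℤ) - a l) M := by
          rw [key0, map_sum]
          refine Finset.sum_congr rfl fun γ _ => ?_
          rw [MvPowerSeries.coeff_C_mul, coeff_prod_A]
          simp only [hE]
      _ = 0 := hzero
  obtain ⟨γ, hγmem, hγne⟩ := Finset.exists_ne_zero_of_sum_ne_zero key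
  have hwne : ∀ l, w ((γ l:ℤ) - a l) M ≠ 0 := by
    intro l h0
    exact hγne (by rw [Finset.prod_eq_zero (Finset.mem_univ l) h0, mul_zero])
  have hdich : ∀ l, (γ l:ℤ) ≤ a l - 1 ∨ a l + M ≤ (γ l:ℤ) := by
    intro l
    rcases w_ne_zero (hwne l) with h' | h'
    · left; omega
    · right; omega
  -- Step B: support bounds for the Vandermonde power
  have hlow : ∀ S : Finset (Fin n), k * (S.card * (S.card - 1)) ≤ ∑ l ∈ S, γ l := by
    intro S
    have hmin : MinWt S (∑ i : Fin n, ∑ j ∈ univ.filter (fun j => i < j),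
        (2*k) * (if i ∈ S ∧ j ∈ S then 1 else 0)) V := by
      rw [hV]
      exact MinWt.prod _ _ _ (fun i _ => MinWt.prod _ _ _
        (fun j _ => minwt_X_sub_X.pow (2*k)))
    have step1 : ∀ i : Fin n, ∑ j ∈ univ.filter (fun j => i < j),
        (2*k) * (if i ∈ S ∧ j ∈ S then 1 else 0)
        = if i ∈ S then (2*k) * (S.filter (fun j => i < j)).card else 0 := by
      intro i
      by_cases hi : i ∈ S
      · simp only [hi, true_and, if_true]
        rw [← Finset.mul_sum]
        congr 1
        rw [Finset.sum_boole]
        norm_cast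
        congr 1
        ext j
        simp only [Finset.mem_filter, Finset.mem_univ, true_and, and_comm]
      · simp [hi]
    have hconst : (∑ i : Fin n, ∑ j ∈ univ.filter (fun j => i < j),
        (2*k) * (if i ∈ S ∧ j ∈ S then 1 else 0))
        = 2*k*(∑ i ∈ S, (S.filter (fun j => i < j)).card) := by
      rw [Finset.sum_congr rfl (fun i _ => step1 i), Finset.sum_ite_mem,
        Finset.univ_inter, Finset.mul_sum]
    have hdc := double_count S
    have := hmin γ hγmem
    rw [hconst] at this
    calc k * (S.card * (S.card - 1)) = 2*k*(∑ i ∈ S, (S.filter (fun j => i < j)).card) := by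
          rw [← hdc]; ring
      _ ≤ wt S γ := this
  have hup : ∑ l : Fin n, γ l ≤ k * (n * (n-1)) := by
    have hmax : MaxWt univ (∑ i : Fin n, ∑ j ∈ univ.filter (fun j => i < j), (2*k) * 1) V := by
      rw [hV]
      exact MaxWt.prod _ _ _ (fun i _ => MaxWt.prod _ _ _
        (fun j _ => maxwt_X_sub_X.pow (2*k)))
    have hdc := double_count (univ : Finset (Fin n))
    rw [Finset.card_univ, Fintype.card_fin] at hdc
    have hconst : (∑ i : Fin n, ∑ j ∈ univ.filter (fun j => i < j), (2*k) * 1)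
        = 2*k*(∑ i ∈ (univ : Finset (Fin n)), (univ.filter (fun j => i < j)).card) := by
      rw [Finset.mul_sum]
      refine Finset.sum_congr rfl fun i _ => ?_
      rw [Finset.sum_const, mul_one, smul_eq_mul, mul_comm]
    have := hmax γ hγmem
    rw [hconst] at this
    calc ∑ l : Fin n, γ l = wt univ γ := rfl
      _ ≤ 2*k*(∑ i ∈ (univ : Finset (Fin n)), (univ.filter (fun j => i < j)).card) := this
      _ = k * (n * (n-1)) := by rw [← hdc]; ring
  -- Step C: counting and the arithmetic endgame
  set T : Finset (Fin n) := univ.filter (fun l => a l + M ≤ (γ l:ℤ)) with hT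
  set Tc : Finset (Fin n) := univ.filter (fun l => ¬ (a l + M ≤ (γ l:ℤ))) with hTc
  have hstc : T.card + Tc.card = n := by
    rw [hT, hTc, Finset.card_filter_add_card_filter_not, Finset.card_univ,
      Fintype.card_fin]
  have hsplitsum : ∑ l ∈ T, γ l + ∑ l ∈ Tc, γ l = ∑ l : Fin n, γ l :=
    Finset.sum_filter_add_sum_filter_not _ _ _
  have hcount : (univ.filter (fun l : Fin n => (l:ℕ) < m)).card = m := by
    refine Finset.card_eq_of_bijective
      (fun i hi => (⟨i, by omega⟩ : Fin n)) ?_ ?_ ?_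
    · intro l hl
      rw [Finset.mem_filter] at hl
      exact ⟨(l:ℕ), hl.2, by ext; rfl⟩
    · intro i hi
      rw [Finset.mem_filter]
      exact ⟨Finset.mem_univ _, hi⟩
    · intro i j hi hj hij
      exact congrArg Fin.val hij
  have hp12 : (T.filter (fun x : Fin n => (x:ℕ) < m)).card
      + (Tc.filter (fun x : Fin n => (x:ℕ) < m)).card = m := by
    have hfc1 : (T.filter (fun x : Fin n => (x:ℕ) < m))
        = ((univ.filter (fun x : Fin n => (x:ℕ) < m)).filter
            (fun l => a l + M ≤ (γ l:ℤ))) := by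
      rw [hT, Finset.filter_comm]
    have hfc2 : (Tc.filter (fun x : Fin n => (x:ℕ) < m))
        = ((univ.filter (fun x : Fin n => (x:ℕ) < m)).filter
            (fun l => ¬ (a l + M ≤ (γ l:ℤ)))) := by
      rw [hTc, Finset.filter_comm]
    rw [hfc1, hfc2, Finset.card_filter_add_card_filter_not, hcount]
  set s := T.card with hs
  set tc := Tc.card with htc
  set p1 := (T.filter (fun x : Fin n => (x:ℕ) < m)).card with hp1
  set p2 := (Tc.filter (fun x : Fin n => (x:ℕ) < m)).card with hp2
  have hp1s : p1 ≤ s := Finset.card_filter_le _ _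
  have hp2tc : p2 ≤ tc := Finset.card_filter_le _ _
  -- sums of `a`
  have hsumT : ∑ l ∈ T, a l = (s:ℤ) * ((h:ℤ) - b) - p1 := by
    simp only [ha]
    rw [Finset.sum_sub_distrib, Finset.sum_const, nsmul_eq_mul, Finset.sum_boole, hp1, hs]
  have hsumTc : ∑ l ∈ Tc, a l = (tc:ℤ) * ((h:ℤ) - b) - p2 := by
    simp only [ha]
    rw [Finset.sum_sub_distrib, Finset.sum_const, nsmul_eq_mul, Finset.sum_boole, hp2, htc]
  -- the two key inequalities, in ℤ
  have castsum : ∀ S : Finset (Fin n), ((∑ l ∈ S, γ l : ℕ) : ℤ) = ∑ l ∈ S, ((γ l:ℕ) : ℤ) := by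
    intro S; push_cast; rfl
  have ineqT : (s:ℤ) * ((h:ℤ)-b) - p1 + s * M ≤ ((∑ l ∈ T, γ l : ℕ) : ℤ) := by
    have hTle : ∑ l ∈ T, (a l + (M:ℤ)) ≤ ∑ l ∈ T, ((γ l:ℕ):ℤ) :=
      Finset.sum_le_sum (fun l hl => (Finset.mem_filter.mp hl).2)
    rw [Finset.sum_add_distrib, hsumT, Finset.sum_const, nsmul_eq_mul] at hTle
    rw [castsum]
    calc (s:ℤ) * ((h:ℤ)-b) - p1 + s * M
        = (s:ℤ) * ((h:ℤ) - b) - p1 + T.card * M := by rw [hs]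
      _ ≤ ∑ l ∈ T, ((γ l:ℕ):ℤ) := hTle
  have ineqTc : ((∑ l ∈ Tc, γ l : ℕ) : ℤ) ≤ (tc:ℤ) * ((h:ℤ)-b) - p2 - tc := by
    have hTcle : ∑ l ∈ Tc, ((γ l:ℕ):ℤ) ≤ ∑ l ∈ Tc, (a l - 1) := by
      refine Finset.sum_le_sum (fun l hl => ?_)
      have hnot := (Finset.mem_filter.mp hl).2
      rcases hdich l with h' | h'
      · omega
      · exact absurd h' hnot
    rw [Finset.sum_sub_distrib, hsumTc, Finset.sum_const, nsmul_eq_mul, mul_one] at hTcle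
    rw [castsum]
    calc ∑ l ∈ Tc, ((γ l:ℕ):ℤ) ≤ (tc:ℤ) * ((h:ℤ) - b) - p2 - Tc.card := hTcle
      _ = (tc:ℤ) * ((h:ℤ) - b) - p2 - tc := by rw [htc]
  have hcastmul : ∀ c : ℕ, ((c*(c-1) : ℕ) : ℤ) = (c:ℤ)*((c:ℤ)-1) := by
    intro c
    cases c with
    | zero => simp
    | succ c => push_cast [Nat.succ_sub_one]; ring
  have hlowTcz : (k:ℤ)*((tc:ℤ)*((tc:ℤ)-1)) ≤ ((∑ l ∈ Tc, γ l : ℕ) : ℤ) := by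
    have := hlow Tc
    calc (k:ℤ)*((tc:ℤ)*((tc:ℤ)-1)) = ((k * (Tc.card * (Tc.card - 1)) : ℕ) : ℤ) := by
          rw [Nat.cast_mul, hcastmul, htc]
      _ ≤ _ := by exact_mod_cast this
  have hupz : ((∑ l ∈ T, γ l : ℕ) : ℤ) + ((∑ l ∈ Tc, γ l : ℕ) : ℤ)
      ≤ (k:ℤ) * (((s:ℤ)+tc) * (((s:ℤ)+tc)-1)) := by
    have hcast2 : ((∑ l : Fin n, γ l : ℕ) : ℤ) ≤ ((k * (n * (n-1)) : ℕ) : ℤ) := by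
      exact_mod_cast hup
    rw [Nat.cast_mul, hcastmul] at hcast2
    have hnz : ((n:ℕ):ℤ) = (s:ℤ) + tc := by exact_mod_cast hstc.symm
    rw [hnz] at hcast2
    calc ((∑ l ∈ T, γ l : ℕ) : ℤ) + ((∑ l ∈ Tc, γ l : ℕ) : ℤ)
        = ((∑ l : Fin n, γ l : ℕ) : ℤ) := by rw [← hsplitsum]; push_cast; ring
      _ ≤ _ := hcast2
  have hMz : (M:ℤ) = ((s:ℤ) + tc - 1)*k + b := by
    rw [hM]
    have hnz : ((n:ℕ):ℤ) = (s:ℤ) + tc := by exact_mod_cast hstc.symm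
    push_cast [Nat.cast_sub (show 1 ≤ n by omega)]
    rw [hnz]
  have eM : (s:ℤ) * (M:ℤ) = (s:ℤ)*((s:ℤ)+tc-1)*k + s*b := by rw [hMz]; ring
  have ineqA : (s:ℤ) * h ≤ (k:ℤ) * s * tc + p1 := by
    have c1 := ineqT
    have c2 := hupz
    have c3 := hlowTcz
    rw [eM] at c1
    nlinarith [c1, c2, c3]
  clear ineqT hupz
  have ineqB : (k:ℤ)*tc*((tc:ℤ)-1) + tc*((b:ℤ)+1) + p2 ≤ (tc:ℤ) * h := by
    nlinarith [ineqTc, hlowTcz]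
  clear ineqTc hlowTcz hsumT hsumTc castsum hdich hwne hγne key key0 hne hlow hup
  clear hsplitsum eM hMz hcastmul
  -- case analysis
  have hmlt : (m:ℤ) < n := by exact_mod_cast (by omega : m < n)
  rcases Nat.eq_zero_or_pos tc with htc0 | htcpos
  · -- `tc = 0` : contradiction
    exfalso
    have hsn : (s:ℤ) = n := by
      have : s = n := by omega
      exact_mod_cast this
    have hp1m : (p1:ℤ) ≤ m := by exact_mod_cast (by omega : p1 ≤ m)
    have htcz : (tc:ℤ) = 0 := by exact_mod_cast htc0
    have hh1 : (1:ℤ) ≤ h := by exact_mod_cast h1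
    rw [hsn, htcz] at ineqA
    have hnle : (n:ℤ)*1 ≤ (n:ℤ)*h :=
      mul_le_mul_of_nonneg_left hh1 (by positivity)
    linarith
  · rcases Nat.eq_zero_or_pos s with hs0 | hspos
    · -- `s = 0`, take `t = n`
      refine ⟨n, le_refl n, Or.inr (Or.inr ⟨by omega, ?_, ?_⟩)⟩
      · have hp1z : p1 = 0 := by omega
        have hp2m : (p2:ℤ) = m := by exact_mod_cast (by omega : p2 = m)
        have htcn : (tc:ℤ) = n := by exact_mod_cast (by omega : tc = n)
        have hm1z : (1:ℤ) ≤ m := by exact_mod_cast hm1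
        have hnpos : (0:ℤ) < n := by positivity
        rw [htcn, hp2m] at ineqB
        have hlt : (n:ℤ)*(((n:ℤ)-1)*k + b + 1) < n * h := by nlinarith [ineqB]
        have := lt_of_mul_lt_mul_left hlt (le_of_lt hnpos)
        linarith
      · have : (h:ℤ) ≤ (n:ℤ)*k + 1 := by exact_mod_cast h2
        linarith
    · -- main case: take `t = tc`
      have htcpos' : (0:ℤ) < tc := by exact_mod_cast htcpos
      have hspos' : (0:ℤ) < s := by exact_mod_cast hspos
      have hlower1 : ((tc:ℤ)-1)*k + b + 1 ≤ (h:ℤ) := by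
        have hstep : (tc:ℤ)*(((tc:ℤ)-1)*k + b + 1) ≤ tc * h := by
          have hp2nn : (0:ℤ) ≤ p2 := by positivity
          nlinarith [ineqB]
        exact le_of_mul_le_mul_left hstep htcpos'
      have hupper1 : (h:ℤ) ≤ (tc:ℤ)*k + 1 := by
        have hp1s' : (p1:ℤ) ≤ s := by exact_mod_cast hp1s
        have hstep : (s:ℤ)*h ≤ s*((tc:ℤ)*k + 1) := by nlinarith [ineqA]
        exact le_of_mul_le_mul_left hstep hspos'
      refine ⟨tc, by omega, ?_⟩
      rcases lt_trichotomy tc (n - m) with hcase | hcase | hcase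
      · -- t < n - m : sharpen the upper bound
        refine Or.inl ⟨hcase, hlower1, ?_⟩
        have hms : m < s := by omega
        have hp1lt : (p1:ℤ) < s := by exact_mod_cast (by omega : p1 < s)
        have hstep : (s:ℤ)*h < s*((tc:ℤ)*k + 1) := by nlinarith [ineqA]
        have := lt_of_mul_lt_mul_left hstep (le_of_lt hspos')
        linarith
      · exact Or.inr (Or.inl ⟨hcase, hlower1, hupper1⟩)
      · -- t > n - m : sharpen the lower bound
        refine Or.inr (Or.inr ⟨hcase, ?_, hupper1⟩)
        have hp2pos : 1 ≤ p2 := by omega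
        have hp2pos' : (1:ℤ) ≤ p2 := by exact_mod_cast hp2pos
        have hstep : (tc:ℤ)*(((tc:ℤ)-1)*k + b + 1) < tc * h := by nlinarith [ineqB]
        have := lt_of_mul_lt_mul_left hstep (le_of_lt htcpos')
        linarith
end

section
/- For the equal-parameter case of the Dyson conjecture: for nonnegative integers $k$ and $n\ge 1$, the constant term of $\prod_{1\le i\ne j\le n}(1-x_i/x_j)^k$ equals $(nk)!/(k!)^n$. -/
open MvPolynomial Finset

namespace DysonAux

/-! ### Definitions -/

noncomputable def pp {n : ℕ} (a : Fin n → ℕ) : MvPolynomial (Fin n) ℚ :=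
  ∏ j : Fin n, ∏ i ∈ Finset.univ.erase j, (X j - X i) ^ a i

noncomputable def tgt {n : ℕ} (a : Fin n → ℕ) : Fin n →₀ ℕ :=
  Finsupp.equivFunOnFinite.symm (fun j => (∑ i, a i) - a j)

lemma tgt_apply {n : ℕ} (a : Fin n → ℕ) (j : Fin n) : tgt a j = (∑ i, a i) - a j := rfl

/-! ### Numeric Lagrange identity -/

lemma lagrange_numeric {n : ℕ} (hn : 1 ≤ n) (y : Fin n → ℚ) (hy : Function.Injective y) :
    ∑ k : Fin n, ∏ j ∈ univ.erase k, y j / (y j - y k) = 1 := by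
  have hinj : Set.InjOn y (univ : Finset (Fin n)) := fun a _ b _ h => hy h
  have hne : (univ : Finset (Fin n)).Nonempty := univ_nonempty_iff.mpr ⟨⟨0, hn⟩⟩
  have h1 := Lagrange.interpolate_one hinj hne
  have h2 := congrArg (Polynomial.eval (0 : ℚ)) h1
  rw [Lagrange.interpolate_apply, Polynomial.eval_one, Polynomial.eval_finset_sum] at h2
  rw [← h2]
  refine Finset.sum_congr rfl fun k _ => ?_
  rw [Pi.one_apply, map_one, one_mul, Lagrange.basis, Polynomial.eval_prod]
  refine Finset.prod_congr rfl fun j hj => ?_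
  have hjk : y j - y k ≠ 0 := sub_ne_zero_of_ne (fun h => (mem_erase.mp hj).1 (hy h))
  rw [Lagrange.basisDivisor]
  simp only [Polynomial.eval_mul, Polynomial.eval_C, Polynomial.eval_sub, Polynomial.eval_X]
  rw [zero_sub, div_eq_mul_inv]
  have h3 : y k - y j = -(y j - y k) := by ring
  rw [h3, inv_neg]
  ring

/-! ### Polynomial Lagrange identity -/

lemma double_prod_split {M : Type*} [CommMonoid M] {n : ℕ} (k : Fin n) (f : Fin n → Fin n → M) :
    ∏ j : Fin n, ∏ i ∈ univ.erase j, f i j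
    = (∏ j ∈ univ.erase k, f k j) * ∏ j : Fin n, ∏ i ∈ (univ.erase j).erase k, f i j := by
  have h : ∀ j : Fin n, ∏ i ∈ univ.erase j, f i j
      = (if j = k then 1 else f k j) * ∏ i ∈ (univ.erase j).erase k, f i j := by
    intro j
    by_cases hj : j = k
    · subst hj
      rw [if_pos rfl, one_mul, Finset.erase_idem]
    · rw [if_neg hj]
      exact (Finset.mul_prod_erase _ _ (mem_erase.mpr ⟨Ne.symm hj, mem_univ k⟩)).symm
  rw [Finset.prod_congr rfl (fun j _ => h j), Finset.prod_mul_distrib]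
  congr 1
  rw [← Finset.prod_erase univ (f := fun j => if j = k then 1 else f k j) (if_pos rfl)]
  exact Finset.prod_congr rfl fun j hj => if_neg (mem_erase.mp hj).1

lemma double_prod_zero {n : ℕ} (y : Fin n → ℚ) {a b : Fin n} (hne : a ≠ b) (hab : y a = y b)
    {k : Fin n} : ∏ j : Fin n, ∏ i ∈ (univ.erase j).erase k, (y j - y i) = 0 := by
  by_cases hbk : b = k
  · refine Finset.prod_eq_zero (mem_univ b) (Finset.prod_eq_zero (i := a) ?_ ?_)
    · exact mem_erase.mpr ⟨fun h => hne (h.trans hbk.symm), mem_erase.mpr ⟨hne, mem_univ a⟩⟩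
    · rw [← hab, sub_self]
  · refine Finset.prod_eq_zero (mem_univ a) (Finset.prod_eq_zero (i := b) ?_ ?_)
    · exact mem_erase.mpr ⟨hbk, mem_erase.mpr ⟨Ne.symm hne, mem_univ b⟩⟩
    · rw [hab, sub_self]

lemma lagrange_poly {n : ℕ} (hn : 1 ≤ n) :
    (∏ j : Fin n, ∏ i ∈ univ.erase j, (X j - X i : MvPolynomial (Fin n) ℚ))
    = ∑ k : Fin n, (∏ j ∈ univ.erase k, X j) *
        ∏ j : Fin n, ∏ i ∈ (univ.erase j).erase k, (X j - X i : MvPolynomial (Fin n) ℚ) := by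
  apply MvPolynomial.funext
  intro y
  simp only [map_sum, map_prod, eval_prod, map_sub, eval_X, eval_mul]
  by_cases hy : Function.Injective y
  · have key := lagrange_numeric hn y hy
    have hne : ∀ k : Fin n, ∀ j ∈ univ.erase k, y j - y k ≠ 0 := by
      intro k j hj
      exact sub_ne_zero_of_ne (fun h => (mem_erase.mp hj).1 (hy h))
    calc ∏ j : Fin n, ∏ i ∈ univ.erase j, (y j - y i)
        = (∑ k : Fin n, ∏ j ∈ univ.erase k, y j / (y j - y k))
          * ∏ j : Fin n, ∏ i ∈ univ.erase j, (y j - y i) := by rw [key, one_mul]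
      _ = ∑ k : Fin n, (∏ j ∈ univ.erase k, y j) *
            ∏ j : Fin n, ∏ i ∈ (univ.erase j).erase k, (y j - y i) := by
          rw [Finset.sum_mul]
          refine Finset.sum_congr rfl fun k _ => ?_
          rw [double_prod_split k (fun i j => y j - y i), Finset.prod_div_distrib]
          have hD : (∏ j ∈ univ.erase k, (y j - y k)) ≠ 0 :=
            Finset.prod_ne_zero_iff.mpr (hne k)
          field_simp
  · simp only [Function.Injective, not_forall] at hy
    obtain ⟨a, b, hab, hne⟩ := hy
    rw [Finset.prod_eq_zero (mem_univ a) (Finset.prod_eq_zero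
        (mem_erase.mpr ⟨Ne.symm hne, mem_univ b⟩) (by rw [hab, sub_self]))]
    symm
    refine Finset.sum_eq_zero fun k _ => ?_
    rw [double_prod_zero y hne hab, mul_zero]

/-! ### The recursion for `pp` -/

lemma pp_rec {n : ℕ} (hn : 1 ≤ n) (a : Fin n → ℕ) (ha : ∀ i, 1 ≤ a i) :
    pp a = ∑ k : Fin n, (∏ j ∈ univ.erase k, (X j : MvPolynomial (Fin n) ℚ)) *
      pp (Function.update a k (a k - 1)) := by
  have expand : pp a = (∏ j : Fin n, ∏ i ∈ univ.erase j, (X j - X i : MvPolynomial (Fin n) ℚ))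
      * ∏ j : Fin n, ∏ i ∈ univ.erase j, (X j - X i) ^ (a i - 1) := by
    unfold pp
    rw [← Finset.prod_mul_distrib]
    refine Finset.prod_congr rfl fun j _ => ?_
    rw [← Finset.prod_mul_distrib]
    refine Finset.prod_congr rfl fun i _ => ?_
    rw [← pow_succ']
    congr 1
    have := ha i
    omega
  rw [expand, lagrange_poly hn, Finset.sum_mul]
  refine Finset.sum_congr rfl fun k _ => ?_
  rw [mul_assoc]
  congr 1
  unfold pp
  rw [← Finset.prod_mul_distrib]
  refine Finset.prod_congr rfl fun j _ => ?_
  by_cases hj : j = k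
  · subst hj
    rw [Finset.erase_idem, ← Finset.prod_mul_distrib]
    refine Finset.prod_congr rfl fun i hi => ?_
    rw [Function.update_of_ne (mem_erase.mp hi).1, ← pow_succ']
    congr 1
    have := ha i
    omega
  · have hk : k ∈ univ.erase j := mem_erase.mpr ⟨fun h => hj h.symm, mem_univ k⟩
    have h1 : ∏ i ∈ univ.erase j, (X j - X i : MvPolynomial (Fin n) ℚ) ^ (a i - 1)
        = (X j - X k) ^ (a k - 1) * ∏ i ∈ (univ.erase j).erase k, (X j - X i) ^ (a i - 1) :=
      (Finset.mul_prod_erase _ _ hk).symm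
    have h2 : ∏ i ∈ univ.erase j, (X j - X i : MvPolynomial (Fin n) ℚ)
          ^ (Function.update a k (a k - 1) i)
        = (X j - X k) ^ (a k - 1) * ∏ i ∈ (univ.erase j).erase k,
            (X j - X i) ^ (Function.update a k (a k - 1) i) := by
      rw [← Finset.mul_prod_erase _ _ hk, Function.update_self]
    have h3 : ∀ i ∈ (univ.erase j).erase k, (X j - X i : MvPolynomial (Fin n) ℚ)
          ^ (Function.update a k (a k - 1) i)
        = (X j - X i) * (X j - X i) ^ (a i - 1) := by
      intro i hi
      rw [Function.update_of_ne (mem_erase.mp hi).1, ← pow_succ']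
      congr 1
      have := ha i
      omega
    rw [h2, h1, Finset.prod_congr rfl h3, Finset.prod_mul_distrib]
    ring

/-! ### Coefficient extraction for the recursion -/

lemma prod_X_eq_monomial {n : ℕ} (s : Finset (Fin n)) :
    (∏ j ∈ s, (X j : MvPolynomial (Fin n) ℚ))
      = monomial (∑ j ∈ s, Finsupp.single j 1) 1 := by
  induction s using Finset.induction_on with
  | empty => simp [monomial_zero', C_1]
  | @insert c s hc ih =>
      rw [Finset.prod_insert hc, Finset.sum_insert hc, ih, X, monomial_mul, one_mul]

lemma sum_update_sub_one {n : ℕ} (a : Fin n → ℕ) (ha : ∀ i, 1 ≤ a i) (k : Fin n) :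
    ∑ i, Function.update a k (a k - 1) i = (∑ i, a i) - 1 := by
  rw [Finset.sum_update_of_mem (mem_univ k), Finset.sdiff_singleton_eq_erase]
  have h := Finset.add_sum_erase univ a (mem_univ k)
  have := ha k
  omega

lemma tgt_rec {n : ℕ} (a : Fin n → ℕ) (ha : ∀ i, 1 ≤ a i) (k : Fin n) :
    tgt a = (∑ j ∈ univ.erase k, Finsupp.single j 1) + tgt (Function.update a k (a k - 1)) := by
  have hupd := sum_update_sub_one a ha k
  have hk := Finset.add_sum_erase univ a (mem_univ k)
  ext j
  rw [Finsupp.add_apply, tgt_apply, tgt_apply, hupd]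
  have hsingle : (∑ j' ∈ univ.erase k, Finsupp.single j' 1) j = if j ∈ univ.erase k then 1 else 0 := by
    rw [Finsupp.finset_sum_apply]
    simp only [Finsupp.single_apply]
    exact Finset.sum_ite_eq' _ _ _
  rw [hsingle]
  by_cases hj : j = k
  · subst hj
    have h1 : a j ≤ ∑ i, a i := Finset.single_le_sum (fun _ _ => Nat.zero_le _) (mem_univ j)
    simp only [mem_erase, ne_eq, not_true_eq_false, false_and, if_false, Function.update_self]
    have := ha j
    omega
  · have h2 : a j ≤ ∑ i ∈ univ.erase k, a i :=
      Finset.single_le_sum (fun _ _ => Nat.zero_le _) (mem_erase.mpr ⟨hj, mem_univ j⟩)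
    rw [if_pos (mem_erase.mpr ⟨hj, mem_univ j⟩), Function.update_of_ne hj]
    have := ha k
    omega

lemma coeff_rec {n : ℕ} (hn : 1 ≤ n) (a : Fin n → ℕ) (ha : ∀ i, 1 ≤ a i) :
    MvPolynomial.coeff (tgt a) (pp a)
      = ∑ k : Fin n, MvPolynomial.coeff (tgt (Function.update a k (a k - 1)))
          (pp (Function.update a k (a k - 1))) := by
  rw [pp_rec hn a ha, MvPolynomial.coeff_sum]
  refine Finset.sum_congr rfl fun k _ => ?_
  rw [prod_X_eq_monomial, tgt_rec a ha k, MvPolynomial.coeff_monomial_mul, one_mul]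

/-! ### Multinomial recursion over ℚ -/

noncomputable def MM {n : ℕ} (a : Fin n → ℕ) : ℚ :=
  ((∑ i, a i).factorial : ℚ) / ∏ i, ((a i).factorial : ℚ)

lemma prod_factorial_ne_zero {n : ℕ} (a : Fin n → ℕ) :
    (∏ i, ((a i).factorial : ℚ)) ≠ 0 :=
  Finset.prod_ne_zero_iff.mpr fun i _ => Nat.cast_ne_zero.mpr (Nat.factorial_ne_zero _)

lemma MM_term {n : ℕ} (a : Fin n → ℕ) (ha : ∀ i, 1 ≤ a i) (k : Fin n) :
    MM (Function.update a k (a k - 1))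
      = (a k : ℚ) * (((∑ i, a i) - 1).factorial : ℚ) / ∏ i, ((a i).factorial : ℚ) := by
  unfold MM
  rw [sum_update_sub_one a ha k]
  have hprod : (∏ i, ((Function.update a k (a k - 1) i).factorial : ℚ))
      = ((a k - 1).factorial : ℚ) * ∏ i ∈ univ.erase k, ((a i).factorial : ℚ) := by
    have hfun : (fun i => ((Function.update a k (a k - 1) i).factorial : ℚ))
        = Function.update (fun i => ((a i).factorial : ℚ)) k (((a k - 1).factorial : ℚ)) := by
      funext i
      by_cases hi : i = k
      · subst hi; rw [Function.update_self, Function.update_self]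
      · rw [Function.update_of_ne hi, Function.update_of_ne hi]
    rw [hfun, Finset.prod_update_of_mem (mem_univ k), Finset.sdiff_singleton_eq_erase]
  have hsplit : (∏ i, ((a i).factorial : ℚ))
      = ((a k).factorial : ℚ) * ∏ i ∈ univ.erase k, ((a i).factorial : ℚ) :=
    (Finset.mul_prod_erase _ _ (mem_univ k)).symm
  have hfac : ((a k).factorial : ℚ) = (a k : ℚ) * ((a k - 1).factorial : ℚ) := by
    have h1 : a k = (a k - 1) + 1 := by have := ha k; omega
    rw [h1, Nat.factorial_succ]
    push_cast
    ring_nf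
  rw [hprod, hsplit, hfac]
  have h2 : ((a k - 1).factorial : ℚ) ≠ 0 := Nat.cast_ne_zero.mpr (Nat.factorial_ne_zero _)
  have h3 : (∏ i ∈ univ.erase k, ((a i).factorial : ℚ)) ≠ 0 :=
    Finset.prod_ne_zero_iff.mpr fun i _ => Nat.cast_ne_zero.mpr (Nat.factorial_ne_zero _)
  have h4 : (a k : ℚ) ≠ 0 := Nat.cast_ne_zero.mpr (by have := ha k; omega)
  field_simp

lemma MM_rec {n : ℕ} (hn : 1 ≤ n) (a : Fin n → ℕ) (ha : ∀ i, 1 ≤ a i) :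
    MM a = ∑ k : Fin n, MM (Function.update a k (a k - 1)) := by
  rw [Finset.sum_congr rfl (fun k _ => MM_term a ha k)]
  rw [← Finset.sum_div, ← Finset.sum_mul]
  have hS : 1 ≤ ∑ i, a i :=
    le_trans (ha ⟨0, hn⟩) (Finset.single_le_sum (fun _ _ => Nat.zero_le _) (mem_univ _))
  have hcast : (∑ k : Fin n, (a k : ℚ)) = ((∑ i, a i : ℕ) : ℚ) := by push_cast; rfl
  rw [hcast]
  unfold MM
  congr 1
  have h1 : (∑ i, a i) = ((∑ i, a i) - 1) + 1 := by omega
  rw [h1, Nat.factorial_succ]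
  push_cast
  ring_nf



/-! ### Permutation invariance -/

lemma pp_perm {n : ℕ} (a : Fin n → ℕ) (e : Equiv.Perm (Fin n)) :
    rename (⇑e) (pp (a ∘ e)) = pp a := by
  unfold pp
  rw [map_prod]
  calc ∏ j : Fin n, rename (⇑e) (∏ i ∈ univ.erase j, (X j - X i) ^ (a ∘ e) i)
      = ∏ j : Fin n, ∏ i ∈ univ.erase (e j), (X (e j) - X i) ^ a i := by
        refine Finset.prod_congr rfl fun j _ => ?_
        rw [map_prod]
        simp only [map_pow, map_sub, rename_X, Function.comp_apply]
        have hmap : (univ.erase (e j)) = (univ.erase j).map e.toEmbedding := by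
          rw [Finset.map_erase, Finset.map_univ_equiv]
          rfl
        rw [hmap, Finset.prod_map]
        rfl
    _ = pp a := Equiv.prod_comp e (fun j' => ∏ i ∈ univ.erase j', (X j' - X i) ^ a i)

lemma tgt_perm {n : ℕ} (a : Fin n → ℕ) (e : Equiv.Perm (Fin n)) :
    Finsupp.mapDomain (⇑e) (tgt (a ∘ e)) = tgt a := by
  have hsum : ∑ i, (a ∘ e) i = ∑ i, a i := Fintype.sum_equiv e _ _ fun i => rfl
  ext j
  have hj : j = e (e.symm j) := (e.apply_symm_apply j).symm
  rw [hj, Finsupp.mapDomain_apply e.injective, tgt_apply, tgt_apply, hsum]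
  rfl

lemma coeff_perm {n : ℕ} (a : Fin n → ℕ) (e : Equiv.Perm (Fin n)) :
    MvPolynomial.coeff (tgt a) (pp a) = MvPolynomial.coeff (tgt (a ∘ e)) (pp (a ∘ e)) := by
  rw [← pp_perm a e, ← tgt_perm a e, coeff_rename_mapDomain _ e.injective]

/-! ### Boundary reduction -/

lemma boundary {n : ℕ} (a : Fin (n + 1) → ℕ) (h0 : a 0 = 0) :
    MvPolynomial.coeff (tgt a) (pp a)
      = MvPolynomial.coeff (tgt (a ∘ Fin.succ)) (pp (a ∘ Fin.succ)) := by
  set a' : Fin n → ℕ := a ∘ Fin.succ with ha'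
  have hsum : ∑ i, a i = ∑ i, a' i := by
    rw [Fin.sum_univ_succ, h0, zero_add]
    rfl
  set S : ℕ := ∑ i, a' i with hSdef
  have emb : (univ : Finset (Fin (n + 1))).erase 0
      = univ.map ⟨Fin.succ, Fin.succ_injective n⟩ := by
    rw [Fin.univ_succ]
    exact Finset.erase_cons _
  have hdecomp : pp a = (∏ i : Fin n, (X 0 - X i.succ) ^ a' i) *
      ∏ j : Fin n, ∏ i ∈ univ.erase j,
        (X j.succ - X i.succ : MvPolynomial (Fin (n + 1)) ℚ) ^ a' i := by
    unfold pp
    rw [Fin.prod_univ_succ]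
    congr 1
    · rw [emb, Finset.prod_map]
      rfl
    · refine Finset.prod_congr rfl fun j _ => ?_
      have h0mem : (0 : Fin (n + 1)) ∈ univ.erase j.succ :=
        mem_erase.mpr ⟨(Fin.succ_ne_zero j).symm, mem_univ _⟩
      rw [← Finset.mul_prod_erase _ _ h0mem, h0, pow_zero, one_mul]
      have e2 : (univ.erase (Fin.succ j)).erase (0 : Fin (n + 1))
          = (univ.erase j).map ⟨Fin.succ, Fin.succ_injective n⟩ := by
        rw [Finset.erase_right_comm, emb]
        exact (Finset.map_erase ⟨Fin.succ, Fin.succ_injective n⟩ univ j).symm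
      rw [e2, Finset.prod_map]
      rfl
  have hphi : finSuccEquiv ℚ n (pp a)
      = (∏ i : Fin n, (Polynomial.X - Polynomial.C (X i)) ^ a' i)
          * Polynomial.C (pp a') := by
    rw [hdecomp, map_mul]
    congr 1
    · rw [map_prod]
      refine Finset.prod_congr rfl fun i _ => ?_
      rw [map_pow, map_sub, finSuccEquiv_X_zero, finSuccEquiv_X_succ]
    · have hC : (Polynomial.C (pp a') : Polynomial (MvPolynomial (Fin n) ℚ))
          = ∏ j : Fin n, ∏ i ∈ univ.erase j,
              (Polynomial.C (X j) - Polynomial.C (X i)) ^ a' i := by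
        unfold pp
        rw [map_prod]
        refine Finset.prod_congr rfl fun j _ => ?_
        rw [map_prod]
        refine Finset.prod_congr rfl fun i _ => ?_
        rw [map_pow, map_sub]
      rw [hC, map_prod]
      refine Finset.prod_congr rfl fun j _ => ?_
      rw [map_prod]
      refine Finset.prod_congr rfl fun i _ => ?_
      rw [map_pow, map_sub, finSuccEquiv_X_succ, finSuccEquiv_X_succ]
  have htgt : tgt a = Finsupp.cons S (tgt a') := by
    ext j
    cases j using Fin.cases with
    | zero => rw [Finsupp.cons_zero, tgt_apply, h0, hsum, Nat.sub_zero]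
    | succ i =>
        rw [Finsupp.cons_succ, tgt_apply, tgt_apply, hsum]
        rfl
  have hmonic : (∏ i : Fin n,
      (Polynomial.X - Polynomial.C (X i : MvPolynomial (Fin n) ℚ)) ^ a' i).Monic :=
    Polynomial.monic_prod_of_monic _ _ fun i _ => (Polynomial.monic_X_sub_C _).pow _
  have hdeg : (∏ i : Fin n,
      (Polynomial.X - Polynomial.C (X i : MvPolynomial (Fin n) ℚ)) ^ a' i).natDegree = S := by
    rw [Polynomial.natDegree_prod_of_monic _ _
      fun i _ => (Polynomial.monic_X_sub_C _).pow _]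
    refine Finset.sum_congr rfl fun i _ => ?_
    rw [Polynomial.natDegree_pow, Polynomial.natDegree_X_sub_C, mul_one]
  have hcoeff1 : (∏ i : Fin n,
      (Polynomial.X - Polynomial.C (X i : MvPolynomial (Fin n) ℚ)) ^ a' i).coeff S = 1 := by
    rw [← hdeg]
    exact hmonic.coeff_natDegree
  rw [htgt, ← MvPolynomial.finSuccEquiv_coeff_coeff, hphi, Polynomial.coeff_mul_C,
    hcoeff1, one_mul]

/-! ### The main induction -/

lemma key : ∀ (n : ℕ) (a : Fin n → ℕ),
    MvPolynomial.coeff (tgt a) (pp a) = MM a := by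
  intro n
  induction n with
  | zero =>
      intro a
      have h1 : pp a = 1 := by
        unfold pp
        rw [Finset.univ_eq_empty, Finset.prod_empty]
      have h2 : tgt a = 0 := Subsingleton.elim _ _
      rw [h1, h2]
      unfold MM
      simp
  | succ m IHn =>
      intro a
      suffices H : ∀ (S : ℕ) (b : Fin (m + 1) → ℕ), ∑ i, b i = S →
          MvPolynomial.coeff (tgt b) (pp b) = MM b from H _ a rfl
      intro S
      induction S using Nat.strong_induction_on with
      | _ S IH =>
        intro b hS
        by_cases hall : ∀ i, 1 ≤ b i
        · have hm1 : 1 ≤ m + 1 := Nat.le_add_left 1 m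
          have hS1 : 1 ≤ S := by
            have h1 := hall 0
            have h2 : b 0 ≤ ∑ i, b i :=
              Finset.single_le_sum (fun _ _ => Nat.zero_le _) (mem_univ _)
            omega
          rw [coeff_rec hm1 b hall, MM_rec hm1 b hall]
          refine Finset.sum_congr rfl fun k _ => ?_
          exact IH (S - 1) (by omega) _ (by rw [sum_update_sub_one b hall k, hS])
        · push_neg at hall
          obtain ⟨k, hk⟩ := hall
          have hk0 : b k = 0 := by omega
          set e : Equiv.Perm (Fin (m + 1)) := Equiv.swap 0 k with he
          have h0 : (b ∘ e) 0 = 0 := by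
            simp only [Function.comp_apply, he, Equiv.swap_apply_left]
            exact hk0
          rw [coeff_perm b e, boundary _ h0, IHn]
          unfold MM
          have h3 : ∑ i, (b ∘ e) i = ∑ i, b i := Fintype.sum_equiv e _ _ fun i => rfl
          have h5 : ∑ i : Fin (m + 1), (b ∘ e) i
              = (b ∘ e) 0 + ∑ i : Fin m, ((b ∘ e) ∘ Fin.succ) i := Fin.sum_univ_succ _
          have hsum2 : ∑ i : Fin m, ((b ∘ e) ∘ Fin.succ) i = ∑ i, b i := by omega
          have h4 : ∏ i : Fin (m + 1), (((b ∘ e) i).factorial : ℚ)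
              = ∏ i, ((b i).factorial : ℚ) := Fintype.prod_equiv e _ _ fun i => rfl
          have h6 : ∏ i : Fin (m + 1), (((b ∘ e) i).factorial : ℚ)
              = (((b ∘ e) 0).factorial : ℚ)
                * ∏ i : Fin m, ((((b ∘ e) ∘ Fin.succ) i).factorial : ℚ) :=
            Fin.prod_univ_succ _
          have hprod2 : ∏ i : Fin m, ((((b ∘ e) ∘ Fin.succ) i).factorial : ℚ)
              = ∏ i, ((b i).factorial : ℚ) := by
            rw [← h4, h6, h0, Nat.factorial_zero, Nat.cast_one, one_mul]
          rw [hsum2, hprod2]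

end DysonAux

/-- **Equal-parameter case of the Dyson conjecture.**  For `n ≥ 1`,
`CT ∏_{1≤i≠j≤n}(1-x_i/x_j)^k = (nk)!/(k!)^n`.  Clearing denominators, the constant
term equals the coefficient of `∏_j x_j^((n-1)k)` in `∏_{i≠j}(x_j-x_i)^k`. -/
theorem dyson_equal_parameters (n k : ℕ) (hn : 1 ≤ n) :
    MvPolynomial.coeff
      (Finsupp.equivFunOnFinite.symm (fun _ : Fin n => (n - 1) * k))
      (∏ j : Fin n, ∏ i ∈ Finset.univ.erase j,
        (X j - X i : MvPolynomial (Fin n) ℚ) ^ k)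
      = ((n * k).factorial : ℚ) / (k.factorial : ℚ) ^ n := by
  have h1 := DysonAux.key n (fun _ => k)
  have hsum : (∑ _i : Fin n, k) = n * k := by
    rw [Finset.sum_const, Finset.card_univ, Fintype.card_fin, smul_eq_mul]
  have h2 : DysonAux.tgt (fun _ : Fin n => k)
      = Finsupp.equivFunOnFinite.symm (fun _ : Fin n => (n - 1) * k) := by
    unfold DysonAux.tgt
    congr 1
    funext j
    rw [hsum, tsub_mul, one_mul]
  have h3 : DysonAux.pp (fun _ : Fin n => k)
      = ∏ j : Fin n, ∏ i ∈ Finset.univ.erase j,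
          (X j - X i : MvPolynomial (Fin n) ℚ) ^ k := rfl
  rw [← h2, ← h3, h1]
  unfold DysonAux.MM
  rw [hsum, Finset.prod_const, Finset.card_univ, Fintype.card_fin]
end
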